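/- arXiv:2605.07298 — 16 statements merged into one kernel-verified Lean document; each statement's English description precedes it below -/
import Mathlib

section
/- For every integer n ≥ 4, the number of minimal forts of the path graph on n vertices satisfies 𝓕(P_n) = 𝓕(P_{n−2}) + 𝓕(P_{n−3}); moreover 𝓕(P_1) = 𝓕(P_2) = 𝓕(P_3) = 1. -/
/-- A fort of a simple graph: a nonempty set of vertices such that every vertex
outside the set has either zero or at least two neighbors in the set. -/
def IsFort {V : Type*} (G : SimpleGraph V) (F : Set V) : Prop :=
  F.Nonempty ∧ ∀ v ∉ F, (G.neighborSet v ∩ F).ncard ≠ 1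

/-- A minimal fort: a fort no proper subset of which is a fort. -/
def IsMinimalFort {V : Type*} (G : SimpleGraph V) (F : Set V) : Prop :=
  IsFort G F ∧ ∀ F' : Set V, F' ⊂ F → ¬ IsFort G F'

/-- The number of minimal forts of a graph. -/
noncomputable def numMinForts {V : Type*} (G : SimpleGraph V) : ℕ :=
  {F : Set V | IsMinimalFort G F}.ncard

set_option linter.unusedSectionVars false

def Mem' (n : ℕ) (F : Set (Fin n)) (k : ℕ) : Prop :=
  ∃ h : k < n, (⟨k, h⟩ : Fin n) ∈ F

lemma mem'_lt {n F k} (h : Mem' n F k) : k < n := h.1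

lemma mem'_fin {n} {F : Set (Fin n)} {j : Fin n} : Mem' n F j.val ↔ j ∈ F :=
  ⟨fun ⟨_, hm⟩ => hm, fun h => ⟨j.2, h⟩⟩

lemma nbhd_inter (n : ℕ) (F : Set (Fin n)) (v : Fin n) :
    (SimpleGraph.pathGraph n).neighborSet v ∩ F
      = {u : Fin n | (v.val + 1 = u.val ∨ u.val + 1 = v.val) ∧ u ∈ F} := by
  ext u
  simp [SimpleGraph.neighborSet, SimpleGraph.pathGraph_adj, Set.mem_inter_iff]

lemma subset_singleton_notMem {α : Type*} {s : Set α} {x : α}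
    (hsub : s ⊆ {x}) (hcard : s.ncard ≠ 1) : s = ∅ := by
  rcases Set.subset_singleton_iff_eq.1 hsub with h | h
  · exact h
  · exact absurd (h ▸ Set.ncard_singleton x) hcard

section steps
variable {n : ℕ} {F : Set (Fin n)} (hF : IsFort (SimpleGraph.pathGraph n) F)
include hF

lemma step_up {k : ℕ} (h0 : ¬ Mem' n F k) (h1 : ¬ Mem' n F (k+1)) :
    ¬ Mem' n F (k+2) := by
  rintro ⟨h2, hm2⟩
  have hv : (⟨k+1, by omega⟩ : Fin n) ∉ F := fun h => h1 ⟨by omega, h⟩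
  have hsub : (SimpleGraph.pathGraph n).neighborSet ⟨k+1, by omega⟩ ∩ F ⊆ {⟨k+2, h2⟩} := by
    rw [nbhd_inter]
    rintro u ⟨hadj | hadj, hu⟩
    · have hadj' : k + 1 + 1 = u.val := hadj
      simp only [Set.mem_singleton_iff]
      exact Fin.ext (show u.val = k + 2 by omega)
    · have hadj' : u.val + 1 = k + 1 := hadj
      have hu' : u = (⟨k, by omega⟩ : Fin n) := Fin.ext (show u.val = k by omega)
      exact absurd (⟨by omega, hu' ▸ hu⟩ : Mem' n F k) h0
  have := subset_singleton_notMem hsub (hF.2 _ hv)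
  have : (⟨k+2, h2⟩ : Fin n) ∉ (SimpleGraph.pathGraph n).neighborSet ⟨k+1, by omega⟩ ∩ F := by
    rw [this]; exact id
  exact this ⟨by rw [SimpleGraph.mem_neighborSet, SimpleGraph.pathGraph_adj]; left; simp, hm2⟩

lemma step_down {k : ℕ} (hk : k + 1 < n) (h1 : ¬ Mem' n F (k+1)) (h2 : ¬ Mem' n F (k+2)) :
    ¬ Mem' n F k := by
  rintro ⟨h0, hm0⟩
  have hv : (⟨k+1, hk⟩ : Fin n) ∉ F := fun h => h1 ⟨hk, h⟩
  have hsub : (SimpleGraph.pathGraph n).neighborSet ⟨k+1, hk⟩ ∩ F ⊆ {⟨k, h0⟩} := by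
    rw [nbhd_inter]
    rintro u ⟨hadj | hadj, hu⟩
    · have hadj' : k + 1 + 1 = u.val := hadj
      have hu' : u = (⟨k + 2, by omega⟩ : Fin n) := Fin.ext (show u.val = k + 2 by omega)
      exact absurd (⟨by omega, hu' ▸ hu⟩ : Mem' n F (k+2)) h2
    · have hadj' : u.val + 1 = k + 1 := hadj
      simp only [Set.mem_singleton_iff]
      exact Fin.ext (show u.val = k by omega)
  have := subset_singleton_notMem hsub (hF.2 _ hv)
  have : (⟨k, h0⟩ : Fin n) ∉ (SimpleGraph.pathGraph n).neighborSet ⟨k+1, hk⟩ ∩ F := by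
    rw [this]; exact id
  exact this ⟨by rw [SimpleGraph.mem_neighborSet, SimpleGraph.pathGraph_adj]; right; simp, hm0⟩

lemma zero_mem : Mem' n F 0 := by
  by_contra h0
  obtain ⟨x, hx⟩ := hF.1
  have hn : 0 < n := x.pos
  have h1 : ¬ Mem' n F 1 := by
    rintro ⟨hlt, hm⟩
    have hv : (⟨0, hn⟩ : Fin n) ∉ F := fun h => h0 ⟨hn, h⟩
    have hsub : (SimpleGraph.pathGraph n).neighborSet ⟨0, hn⟩ ∩ F ⊆ {⟨1, hlt⟩} := by
      rw [nbhd_inter]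
      rintro u ⟨hadj | hadj, hu⟩
      · have hadj' : 0 + 1 = u.val := hadj
        simp only [Set.mem_singleton_iff]
        exact Fin.ext (show u.val = 1 by omega)
      · have hadj' : u.val + 1 = 0 := hadj
        omega
    have heq := subset_singleton_notMem hsub (hF.2 _ hv)
    have : (⟨1, hlt⟩ : Fin n) ∉ (SimpleGraph.pathGraph n).neighborSet ⟨0, hn⟩ ∩ F := by
      rw [heq]; exact id
    exact this ⟨by rw [SimpleGraph.mem_neighborSet, SimpleGraph.pathGraph_adj]; left; simp, hm⟩
  have hall : ∀ d, ¬ Mem' n F d ∧ ¬ Mem' n F (d+1) := by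
    intro d
    induction d with
    | zero => exact ⟨h0, h1⟩
    | succ d ih => exact ⟨ih.2, step_up hF ih.1 ih.2⟩
  exact (hall x.val).1 (mem'_fin.2 hx)

lemma pair_missing {k : ℕ} (hk : k + 1 < n) (h0 : ¬ Mem' n F k) (h1 : ¬ Mem' n F (k+1)) :
    False := by
  obtain ⟨x, hx⟩ := hF.1
  have hup : ∀ d, ¬ Mem' n F (k+d) ∧ ¬ Mem' n F (k+d+1) := by
    intro d
    induction d with
    | zero => exact ⟨h0, h1⟩
    | succ d ih => exact ⟨ih.2, step_up hF ih.1 ih.2⟩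
  have hdown : ∀ d, ¬ Mem' n F (k-d) ∧ ¬ Mem' n F (k-d+1) := by
    intro d
    induction d with
    | zero => exact ⟨h0, by simpa using h1⟩
    | succ d ih =>
      rcases Nat.eq_zero_or_pos (k - d) with hz | hp
      · constructor
        · rw [show k - (d+1) = 0 by omega]; rw [hz] at ih; exact ih.1
        · rw [show k - (d+1) + 1 = 1 by omega]; rw [hz] at ih; exact ih.2
      · have h1' : ¬ Mem' n F ((k - (d+1)) + 1) := by
          rw [show k - (d+1) + 1 = k - d by omega]; exact ih.1
        have h2' : ¬ Mem' n F ((k - (d+1)) + 2) := by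
          rw [show k - (d+1) + 2 = k - d + 1 by omega]; exact ih.2
        exact ⟨step_down hF (by omega) h1' h2', h1'⟩
  have hx' : Mem' n F x.val := mem'_fin.2 hx
  rcases le_or_gt x.val k with hle | hgt
  · have := (hdown (k - x.val)).1
    rw [show k - (k - x.val) = x.val by omega] at this
    exact this hx'
  · have := (hup (x.val - k)).1
    rw [show k + (x.val - k) = x.val by omega] at this
    exact this hx'

end steps

def FortChar (n : ℕ) (F : Set (Fin n)) : Prop :=
  Mem' n F 0 ∧ ∀ k, k + 1 < n → ¬ Mem' n F (k+1) → Mem' n F k ∧ Mem' n F (k+2)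

def NoTriple (n : ℕ) (F : Set (Fin n)) : Prop :=
  ∀ k, ¬ (Mem' n F k ∧ Mem' n F (k+1) ∧ Mem' n F (k+2))

def MinChar (n : ℕ) (F : Set (Fin n)) : Prop := FortChar n F ∧ NoTriple n F

lemma fort_iff_char {n : ℕ} {F : Set (Fin n)} :
    IsFort (SimpleGraph.pathGraph n) F ↔ FortChar n F := by
  constructor
  · intro hF
    refine ⟨zero_mem hF, fun k hk hnm => ?_⟩
    have hMk : Mem' n F k := by
      by_contra h
      exact pair_missing hF hk h hnm
    refine ⟨hMk, ?_⟩
    by_contra h2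
    have hv : (⟨k+1, hk⟩ : Fin n) ∉ F := fun h => hnm ⟨hk, h⟩
    have hsub : (SimpleGraph.pathGraph n).neighborSet ⟨k+1, hk⟩ ∩ F ⊆ {⟨k, by omega⟩} := by
      rw [nbhd_inter]
      rintro u ⟨hadj | hadj, hu⟩
      · have hadj' : k + 1 + 1 = u.val := hadj
        have hun := u.2
        have hu' : u = (⟨k + 2, by omega⟩ : Fin n) := Fin.ext (show u.val = k + 2 by omega)
        exact absurd (⟨by omega, hu' ▸ hu⟩ : Mem' n F (k+2)) h2
      · have hadj' : u.val + 1 = k + 1 := hadj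
        simp only [Set.mem_singleton_iff]
        exact Fin.ext (show u.val = k by omega)
    have heq := subset_singleton_notMem hsub (hF.2 _ hv)
    have hnin : (⟨k, by omega⟩ : Fin n) ∉
        (SimpleGraph.pathGraph n).neighborSet ⟨k+1, hk⟩ ∩ F := by
      rw [heq]; exact id
    obtain ⟨hlt, hm⟩ := hMk
    exact hnin ⟨by rw [SimpleGraph.mem_neighborSet, SimpleGraph.pathGraph_adj]; right; simp, hm⟩
  · rintro ⟨⟨h0lt, h0⟩, hchar⟩
    refine ⟨⟨_, h0⟩, fun v hv => ?_⟩
    obtain ⟨k, hk⟩ : ∃ k, v.val = k + 1 := by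
      rcases Nat.eq_zero_or_pos v.val with h | h
      · have hv0 : v = (⟨0, h0lt⟩ : Fin n) := Fin.ext (show v.val = 0 from h)
        exact absurd (hv0 ▸ h0) hv
      · exact ⟨v.val - 1, by omega⟩
    have hk1 : k + 1 < n := hk ▸ v.2
    have hnm : ¬ Mem' n F (k+1) := by
      rintro ⟨hlt', hm⟩
      have hv1 : v = (⟨k+1, hlt'⟩ : Fin n) := Fin.ext (show v.val = k + 1 from hk)
      exact hv (hv1 ▸ hm)
    obtain ⟨⟨hklt, hmk⟩, ⟨hk2lt, hmk2⟩⟩ := hchar k hk1 hnm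
    have hset : (SimpleGraph.pathGraph n).neighborSet v ∩ F
        = {(⟨k, hklt⟩ : Fin n), ⟨k+2, hk2lt⟩} := by
      rw [nbhd_inter]
      ext u
      simp only [Set.mem_setOf_eq, Set.mem_insert_iff, Set.mem_singleton_iff]
      constructor
      · rintro ⟨hadj | hadj, hu⟩
        · right; exact Fin.ext (show u.val = k + 2 by omega)
        · left; exact Fin.ext (show u.val = k by omega)
      · rintro (rfl | rfl)
        · exact ⟨Or.inr (by simp [hk]), hmk⟩
        · exact ⟨Or.inl (by simp [hk]), hmk2⟩
    rw [hset, Set.ncard_pair (by simp [Fin.ext_iff])]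
    omega

lemma minfort_iff_char {n : ℕ} {F : Set (Fin n)} :
    IsMinimalFort (SimpleGraph.pathGraph n) F ↔ MinChar n F := by
  unfold IsMinimalFort MinChar
  simp only [fort_iff_char]
  constructor
  · rintro ⟨hc, hmin⟩
    refine ⟨hc, fun k htrip => ?_⟩
    obtain ⟨⟨hklt, hmk⟩, ⟨hk1lt, hmk1⟩, ⟨hk2lt, hmk2⟩⟩ := htrip
    -- remove k+1 to get a smaller fort
    set F' : Set (Fin n) := F \ {⟨k+1, hk1lt⟩} with hF'
    have hss : F' ⊂ F := by
      constructor
      · exact Set.diff_subset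
      · intro hsub
        exact (hsub hmk1).2 rfl
    obtain ⟨h0lt, h0m⟩ := hc.1
    refine hmin F' hss ⟨⟨h0lt, ⟨h0m, by simp [Fin.ext_iff]⟩⟩, fun j hj hnm => ?_⟩
    have memF' : ∀ m (hm : m < n), m ≠ k + 1 → (⟨m, hm⟩ : Fin n) ∈ F → Mem' n F' m := by
      intro m hm hne hmem
      exact ⟨hm, ⟨hmem, by simp [Fin.ext_iff, hne]⟩⟩
    rcases eq_or_ne (j+1) (k+1) with heq | hne
    · -- removed vertex: neighbors k, k+2 are in F'
      have hjk : j = k := by omega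
      subst hjk
      exact ⟨memF' j (by omega) (by omega) hmk, memF' (j+2) (by omega) (by omega) hmk2⟩
    · have hnmF : ¬ Mem' n F (j+1) := by
        rintro ⟨hlt, hm⟩
        exact hnm ⟨hlt, ⟨hm, by simp [Fin.ext_iff]; omega⟩⟩
      obtain ⟨⟨hjlt, hmj⟩, ⟨hj2lt, hmj2⟩⟩ := hc.2 j hj hnmF
      constructor
      · refine memF' j hjlt (fun h => ?_) hmj
        -- j = k+1 would mean j ∈ F but j+1 ∉ F while k+2 = j+1 ∈ F, contradiction
        exact hnmF (by rw [h]; exact ⟨hk2lt, by convert hmk2 using 2⟩)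
      · refine memF' (j+2) hj2lt (fun h => ?_) hmj2
        -- j+2 = k+1 means j+1 = k ∈ F, contradiction with j+1 ∉ F
        exact hnmF (by rw [show j + 1 = k from by omega]; exact ⟨hklt, hmk⟩)
  · rintro ⟨hc, hnt⟩
    refine ⟨hc, fun F' hss hc' => ?_⟩
    obtain ⟨x, hxF, hxF'⟩ := Set.exists_of_ssubset hss
    rcases Nat.eq_zero_or_pos x.val with h0 | hp
    · obtain ⟨hlt, hm⟩ := hc'.1
      have : x = (⟨0, hlt⟩ : Fin n) := Fin.ext h0
      exact hxF' (this ▸ hm)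
    · obtain ⟨k, hk⟩ : ∃ k, x.val = k + 1 := ⟨x.val - 1, by omega⟩
      have hk1 : k + 1 < n := hk ▸ x.2
      have hnm' : ¬ Mem' n F' (k+1) := by
        rintro ⟨hlt, hm⟩
        have : x = (⟨k+1, hlt⟩ : Fin n) := Fin.ext hk
        exact hxF' (this ▸ hm)
      obtain ⟨⟨hklt, hmk⟩, ⟨hk2lt, hmk2⟩⟩ := hc'.2 k hk1 hnm'
      refine hnt k ⟨⟨hklt, hss.1 hmk⟩, ⟨hk1, ?_⟩, ⟨hk2lt, hss.1 hmk2⟩⟩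
      have : x = (⟨k+1, hk1⟩ : Fin n) := Fin.ext hk
      exact this ▸ hxF

lemma mem'_congr {n : ℕ} {F : Set (Fin n)} {a b : ℕ} (h : a = b) :
    Mem' n F a ↔ Mem' n F b := by rw [h]

def shiftSet (n t : ℕ) (F : Set (Fin n)) : Set (Fin (n - t)) :=
  {i | Mem' n F (i.val + t)}

lemma mem'_shift {n t k : ℕ} {F : Set (Fin n)} :
    Mem' (n - t) (shiftSet n t F) k ↔ k < n - t ∧ Mem' n F (k + t) :=
  ⟨fun ⟨h, hm⟩ => ⟨h, hm⟩, fun ⟨h, hm⟩ => ⟨h, hm⟩⟩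

def unshiftA (n : ℕ) (F' : Set (Fin (n - 2))) : Set (Fin n) :=
  {j | j.val = 0 ∨ (2 ≤ j.val ∧ Mem' (n - 2) F' (j.val - 2))}

lemma mem'_unshiftA {n k : ℕ} {F' : Set (Fin (n - 2))} :
    Mem' n (unshiftA n F') k ↔ k < n ∧ (k = 0 ∨ (2 ≤ k ∧ Mem' (n - 2) F' (k - 2))) :=
  ⟨fun ⟨h, hm⟩ => ⟨h, hm⟩, fun ⟨h, hm⟩ => ⟨h, hm⟩⟩

def unshiftB (n : ℕ) (F' : Set (Fin (n - 3))) : Set (Fin n) :=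
  {j | j.val ≤ 1 ∨ (3 ≤ j.val ∧ Mem' (n - 3) F' (j.val - 3))}

lemma mem'_unshiftB {n k : ℕ} {F' : Set (Fin (n - 3))} :
    Mem' n (unshiftB n F') k ↔ k < n ∧ (k ≤ 1 ∨ (3 ≤ k ∧ Mem' (n - 3) F' (k - 3))) :=
  ⟨fun ⟨h, hm⟩ => ⟨h, hm⟩, fun ⟨h, hm⟩ => ⟨h, hm⟩⟩

section caseA
variable {n : ℕ} (hn : 4 ≤ n) {F : Set (Fin n)} (hF : MinChar n F) (h1 : ¬ Mem' n F 1)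
include hn hF h1

lemma caseA_M2 : Mem' n F 2 := (hF.1.2 0 (by omega) h1).2

lemma caseA_char : MinChar (n - 2) (shiftSet n 2 F) := by
  obtain ⟨⟨hm0, hchar⟩, hnt⟩ := hF
  refine ⟨⟨mem'_shift.2 ⟨by omega, caseA_M2 hn ⟨⟨hm0, hchar⟩, hnt⟩ h1⟩, fun k hk hnmk => ?_⟩, ?_⟩
  · have hnm : ¬ Mem' n F (k + 3) := fun hm =>
      hnmk (mem'_shift.2 ⟨by omega, (mem'_congr (by omega)).2 hm⟩)
    obtain ⟨hA, hB⟩ := hchar (k + 2) (by omega) (fun hm => hnm ((mem'_congr (by omega)).1 hm))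
    refine ⟨mem'_shift.2 ⟨by omega, hA⟩, mem'_shift.2 ⟨?_, (mem'_congr (by omega)).1 hB⟩⟩
    have := mem'_lt hB
    omega
  · intro k htrip
    obtain ⟨ha, hb, hc⟩ := htrip
    refine hnt (k + 2) ⟨(mem'_shift.1 ha).2, ?_, ?_⟩
    · exact (mem'_congr (by omega)).1 (mem'_shift.1 hb).2
    · exact (mem'_congr (by omega)).1 (mem'_shift.1 hc).2

lemma caseA_recon (k : ℕ) :
    Mem' n F k ↔ (k = 0 ∧ 0 < n) ∨ (2 ≤ k ∧ Mem' (n - 2) (shiftSet n 2 F) (k - 2)) := by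
  rcases k with _ | _ | k
  · constructor
    · intro _; exact Or.inl ⟨by omega, by omega⟩
    · intro _; exact hF.1.1
  · constructor
    · intro hm; exact absurd hm h1
    · rintro (⟨h, _⟩ | ⟨h, _⟩) <;> omega
  · rw [mem'_congr (show k + 1 + 1 - 2 = k by omega), mem'_shift]
    constructor
    · intro hm
      have := mem'_lt hm
      exact Or.inr ⟨by omega, by omega, (mem'_congr (by omega)).1 hm⟩
    · rintro (⟨h, _⟩ | ⟨_, _, hm⟩)
      · omega
      · exact (mem'_congr (by omega)).1 hm

end caseA

section caseAun
variable {n : ℕ} (hn : 4 ≤ n) {F' : Set (Fin (n - 2))} (hF' : MinChar (n - 2) F')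
include hn hF'

lemma caseA_un_not1 : ¬ Mem' n (unshiftA n F') 1 := by
  intro hm
  have := (mem'_unshiftA.1 hm).2
  omega

lemma caseA_un_char : MinChar n (unshiftA n F') := by
  obtain ⟨⟨hm0', hchar'⟩, hnt'⟩ := hF'
  have hM2 : Mem' n (unshiftA n F') 2 :=
    mem'_unshiftA.2 ⟨by omega, Or.inr ⟨by omega, (mem'_congr (by omega)).1 hm0'⟩⟩
  constructor
  constructor
  · exact mem'_unshiftA.2 ⟨by omega, Or.inl rfl⟩
  · intro k hk hnm
    rcases k with _ | _ | k
    · exact ⟨mem'_unshiftA.2 ⟨by omega, Or.inl rfl⟩, hM2⟩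
    · exact absurd hM2 hnm
    · -- k + 2 ≥ 2 case; write m := k + 2
      have hnm' : ¬ Mem' (n - 2) F' (k + 1) := by
        intro hm
        exact hnm (mem'_unshiftA.2 ⟨by omega, Or.inr ⟨by omega, (mem'_congr (by omega)).1 hm⟩⟩)
      obtain ⟨hA, hB⟩ := hchar' k (by omega) hnm'
      have hBlt := mem'_lt hB
      refine ⟨mem'_unshiftA.2 ⟨by omega, Or.inr ⟨by omega, (mem'_congr (by omega)).1 hA⟩⟩,
        mem'_unshiftA.2 ⟨by omega, Or.inr ⟨by omega, (mem'_congr (by omega)).1 hB⟩⟩⟩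
  · intro k htrip
    obtain ⟨ha, hb, hc⟩ := htrip
    obtain ⟨-, hb'⟩ := mem'_unshiftA.1 hb
    obtain ⟨-, ha'⟩ := mem'_unshiftA.1 ha
    obtain ⟨-, hc'⟩ := mem'_unshiftA.1 hc
    have hk2 : 2 ≤ k := by
      rcases ha' with h | ⟨h, _⟩
      · rcases hb' with h' | ⟨h', _⟩ <;> omega
      · omega
    rcases ha' with h | ⟨-, hma⟩; · omega
    rcases hb' with h | ⟨-, hmb⟩; · omega
    rcases hc' with h | ⟨-, hmc⟩; · omega
    refine hnt' (k - 2) ⟨hma, ?_, ?_⟩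
    · exact (mem'_congr (by omega)).1 hmb
    · exact (mem'_congr (by omega)).1 hmc

lemma caseA_un_shift : shiftSet n 2 (unshiftA n F') = F' := by
  ext i
  have hi := i.2
  constructor
  · intro hm
    have hm' : Mem' n (unshiftA n F') (i.val + 2) := hm
    obtain ⟨-, h | ⟨-, hmem⟩⟩ := mem'_unshiftA.1 hm'
    · omega
    · exact mem'_fin.1 ((mem'_congr (show i.val + 2 - 2 = i.val by omega)).1 hmem)
  · intro hmem
    show Mem' n (unshiftA n F') (i.val + 2)
    exact mem'_unshiftA.2 ⟨by omega, Or.inr ⟨by omega,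
      (mem'_congr (show i.val = i.val + 2 - 2 by omega)).1 (mem'_fin.2 hmem)⟩⟩

end caseAun

section caseB
variable {n : ℕ} (hn : 4 ≤ n) {F : Set (Fin n)} (hF : MinChar n F) (h1 : Mem' n F 1)
include hn hF h1

lemma caseB_not2 : ¬ Mem' n F 2 := fun h => hF.2 0 ⟨hF.1.1, h1, h⟩

lemma caseB_M3 : Mem' n F 3 :=
  (mem'_congr (by omega)).1 (hF.1.2 1 (by omega)
    (fun hm => caseB_not2 hn hF h1 ((mem'_congr (by omega)).1 hm))).2

lemma caseB_char : MinChar (n - 3) (shiftSet n 3 F) := by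
  have hnt := hF.2
  obtain ⟨⟨hm0, hchar⟩, -⟩ := hF
  refine ⟨⟨mem'_shift.2 ⟨by omega, (mem'_congr (by omega)).1 (caseB_M3 hn ⟨⟨hm0, hchar⟩, hnt⟩ h1)⟩,
    fun k hk hnmk => ?_⟩, fun k htrip => ?_⟩
  · have hnm : ¬ Mem' n F (k + 4) := fun hm =>
      hnmk (mem'_shift.2 ⟨by omega, (mem'_congr (by omega)).2 hm⟩)
    obtain ⟨hA, hB⟩ := hchar (k + 3) (by omega) (fun hm => hnm ((mem'_congr (by omega)).1 hm))
    have hBlt := mem'_lt hB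
    refine ⟨mem'_shift.2 ⟨by omega, hA⟩, mem'_shift.2 ⟨by omega, (mem'_congr (by omega)).1 hB⟩⟩
  · obtain ⟨ha, hb, hc⟩ := htrip
    refine hnt (k + 3) ⟨(mem'_shift.1 ha).2, ?_, ?_⟩
    · exact (mem'_congr (by omega)).1 (mem'_shift.1 hb).2
    · exact (mem'_congr (by omega)).1 (mem'_shift.1 hc).2

lemma caseB_recon (k : ℕ) :
    Mem' n F k ↔ (k ≤ 1 ∧ k < n) ∨ (3 ≤ k ∧ Mem' (n - 3) (shiftSet n 3 F) (k - 3)) := by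
  rcases k with _ | _ | _ | k
  · constructor
    · intro _; exact Or.inl ⟨by omega, by omega⟩
    · intro _; exact hF.1.1
  · constructor
    · intro _; exact Or.inl ⟨by omega, by omega⟩
    · intro _; exact h1
  · constructor
    · intro hm; exact absurd hm (caseB_not2 hn hF h1)
    · rintro (⟨h, _⟩ | ⟨h, _⟩) <;> omega
  · rw [mem'_congr (show k + 1 + 1 + 1 - 3 = k by omega), mem'_shift]
    constructor
    · intro hm
      have := mem'_lt hm
      exact Or.inr ⟨by omega, by omega, (mem'_congr (by omega)).1 hm⟩
    · rintro (⟨h, _⟩ | ⟨_, _, hm⟩)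
      · omega
      · exact (mem'_congr (by omega)).1 hm

end caseB

section caseBun
variable {n : ℕ} (hn : 4 ≤ n) {F' : Set (Fin (n - 3))} (hF' : MinChar (n - 3) F')
include hn hF'

omit hF' in
lemma caseB_un_mem1 : Mem' n (unshiftB n F') 1 :=
  mem'_unshiftB.2 ⟨by omega, Or.inl (by omega)⟩

lemma caseB_un_char : MinChar n (unshiftB n F') := by
  obtain ⟨⟨hm0', hchar'⟩, hnt'⟩ := hF'
  have hM3 : Mem' n (unshiftB n F') 3 :=
    mem'_unshiftB.2 ⟨by omega, Or.inr ⟨by omega, (mem'_congr (by omega)).1 hm0'⟩⟩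
  constructor
  constructor
  · exact mem'_unshiftB.2 ⟨by omega, Or.inl (by omega)⟩
  · intro k hk hnm
    rcases k with _ | _ | _ | k
    · exact absurd (caseB_un_mem1 hn) hnm
    · exact ⟨caseB_un_mem1 hn, hM3⟩
    · exact absurd hM3 hnm
    · have hnm' : ¬ Mem' (n - 3) F' (k + 1) := by
        intro hm
        exact hnm (mem'_unshiftB.2 ⟨by omega, Or.inr ⟨by omega, (mem'_congr (by omega)).1 hm⟩⟩)
      obtain ⟨hA, hB⟩ := hchar' k (by omega) hnm'
      have hBlt := mem'_lt hB
      refine ⟨mem'_unshiftB.2 ⟨by omega, Or.inr ⟨by omega, (mem'_congr (by omega)).1 hA⟩⟩,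
        mem'_unshiftB.2 ⟨by omega, Or.inr ⟨by omega, (mem'_congr (by omega)).1 hB⟩⟩⟩
  · intro k htrip
    obtain ⟨ha, hb, hc⟩ := htrip
    obtain ⟨-, ha'⟩ := mem'_unshiftB.1 ha
    obtain ⟨-, hb'⟩ := mem'_unshiftB.1 hb
    obtain ⟨-, hc'⟩ := mem'_unshiftB.1 hc
    have hk3 : 3 ≤ k := by
      rcases ha' with h | ⟨h, _⟩
      · rcases hb' with h' | ⟨h', _⟩
        · rcases hc' with h'' | ⟨h'', _⟩ <;> omega
        · omega
      · omega
    rcases ha' with h | ⟨-, hma⟩; · omega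
    rcases hb' with h | ⟨-, hmb⟩; · omega
    rcases hc' with h | ⟨-, hmc⟩; · omega
    refine hnt' (k - 3) ⟨hma, ?_, ?_⟩
    · exact (mem'_congr (by omega)).1 hmb
    · exact (mem'_congr (by omega)).1 hmc

omit hF' in
lemma caseB_un_shift : shiftSet n 3 (unshiftB n F') = F' := by
  ext i
  have hi := i.2
  constructor
  · intro hm
    have hm' : Mem' n (unshiftB n F') (i.val + 3) := hm
    obtain ⟨-, h | ⟨-, hmem⟩⟩ := mem'_unshiftB.1 hm'
    · omega
    · exact mem'_fin.1 ((mem'_congr (show i.val + 3 - 3 = i.val by omega)).1 hmem)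
  · intro hmem
    show Mem' n (unshiftB n F') (i.val + 3)
    exact mem'_unshiftB.2 ⟨by omega, Or.inr ⟨by omega,
      (mem'_congr (show i.val = i.val + 3 - 3 by omega)).1 (mem'_fin.2 hmem)⟩⟩

end caseBun

lemma minchar_ncard_rec {n : ℕ} (hn : 4 ≤ n) :
    {F : Set (Fin n) | MinChar n F}.ncard =
      {F : Set (Fin (n - 2)) | MinChar (n - 2) F}.ncard +
        {F : Set (Fin (n - 3)) | MinChar (n - 3) F}.ncard := by
  classical
  set A : Set (Set (Fin n)) := {F | MinChar n F ∧ ¬ Mem' n F 1} with hA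
  set B : Set (Set (Fin n)) := {F | MinChar n F ∧ Mem' n F 1} with hB
  have hunion : {F : Set (Fin n) | MinChar n F} = A ∪ B := by
    ext F
    simp only [hA, hB, Set.mem_setOf_eq, Set.mem_union]
    tauto
  have hdis : Disjoint A B := by
    rw [Set.disjoint_left]
    rintro F ⟨-, h1⟩ ⟨-, h2⟩
    exact h1 h2
  rw [hunion, Set.ncard_union_eq hdis (Set.toFinite _) (Set.toFinite _)]
  congr 1
  · have hinj : Set.InjOn (shiftSet n 2) A := by
      rintro F ⟨hF, h1F⟩ G ⟨hG, h1G⟩ heq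
      ext j
      rw [← mem'_fin, ← mem'_fin, caseA_recon hn hF h1F, caseA_recon hn hG h1G, heq]
    have himg : shiftSet n 2 '' A = {F' : Set (Fin (n - 2)) | MinChar (n - 2) F'} := by
      ext F'
      simp only [Set.mem_image, Set.mem_setOf_eq]
      constructor
      · rintro ⟨F, ⟨hF, h1F⟩, rfl⟩
        exact caseA_char hn hF h1F
      · intro hF'
        exact ⟨unshiftA n F', ⟨caseA_un_char hn hF', caseA_un_not1 hn hF'⟩, caseA_un_shift hn hF'⟩
    rw [← himg, Set.ncard_image_of_injOn hinj]
  · have hinj : Set.InjOn (shiftSet n 3) B := by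
      rintro F ⟨hF, h1F⟩ G ⟨hG, h1G⟩ heq
      ext j
      rw [← mem'_fin, ← mem'_fin, caseB_recon hn hF h1F, caseB_recon hn hG h1G, heq]
    have himg : shiftSet n 3 '' B = {F' : Set (Fin (n - 3)) | MinChar (n - 3) F'} := by
      ext F'
      simp only [Set.mem_image, Set.mem_setOf_eq]
      constructor
      · rintro ⟨F, ⟨hF, h1F⟩, rfl⟩
        exact caseB_char hn hF h1F
      · intro hF'
        exact ⟨unshiftB n F', ⟨caseB_un_char hn hF', caseB_un_mem1 hn⟩, caseB_un_shift hn⟩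
    rw [← himg, Set.ncard_image_of_injOn hinj]

lemma numMinForts_eq (m : ℕ) :
    numMinForts (SimpleGraph.pathGraph m) = {F : Set (Fin m) | MinChar m F}.ncard := by
  unfold numMinForts
  congr 1
  ext F
  exact minfort_iff_char

lemma minchar_one : {F : Set (Fin 1) | MinChar 1 F} = {Set.univ} := by
  ext F
  simp only [Set.mem_setOf_eq, Set.mem_singleton_iff]
  constructor
  · rintro ⟨⟨⟨h0, hm⟩, -⟩, -⟩
    apply Set.eq_univ_of_forall
    intro x
    have hx := x.2
    have : x = (⟨0, h0⟩ : Fin 1) := Fin.ext (by omega)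
    rwa [this]
  · rintro rfl
    refine ⟨⟨⟨by omega, Set.mem_univ _⟩, fun k hk => absurd hk (by omega)⟩, fun k htrip => ?_⟩
    obtain ⟨-, -, hm⟩ := htrip
    exact absurd (mem'_lt hm) (by omega)

lemma minchar_two : {F : Set (Fin 2) | MinChar 2 F} = {Set.univ} := by
  ext F
  simp only [Set.mem_setOf_eq, Set.mem_singleton_iff]
  constructor
  · rintro ⟨⟨hm0, hchar⟩, -⟩
    have hm1 : Mem' 2 F 1 := by
      by_contra hm
      obtain ⟨-, h2⟩ := hchar 0 (by omega) hm
      exact absurd (mem'_lt h2) (by omega)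
    apply Set.eq_univ_of_forall
    intro x
    have hx := x.2
    rcases (show x.val = 0 ∨ x.val = 1 by omega) with h | h
    · obtain ⟨h0, hf⟩ := hm0
      have : x = (⟨0, h0⟩ : Fin 2) := Fin.ext (show x.val = 0 from h)
      rwa [this]
    · obtain ⟨h0, hf⟩ := hm1
      have : x = (⟨1, h0⟩ : Fin 2) := Fin.ext (show x.val = 1 from h)
      rwa [this]
  · rintro rfl
    refine ⟨⟨⟨by omega, Set.mem_univ _⟩, fun k hk hnm =>
      absurd (⟨by omega, Set.mem_univ _⟩ : Mem' 2 Set.univ (k+1)) hnm⟩, fun k htrip => ?_⟩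
    obtain ⟨-, -, hm⟩ := htrip
    exact absurd (mem'_lt hm) (by omega)

lemma minchar_three :
    {F : Set (Fin 3) | MinChar 3 F}
      = {({⟨0, by omega⟩, ⟨2, by omega⟩} : Set (Fin 3))} := by
  ext F
  simp only [Set.mem_setOf_eq, Set.mem_singleton_iff]
  constructor
  · rintro ⟨⟨hm0, hchar⟩, hnt⟩
    have hm1 : ¬ Mem' 3 F 1 := by
      intro h1
      have hm2 : Mem' 3 F 2 := by
        by_contra h2
        obtain ⟨-, h3⟩ := hchar 1 (by omega) h2
        exact absurd (mem'_lt h3) (by omega)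
      exact hnt 0 ⟨hm0, h1, hm2⟩
    obtain ⟨-, hm2⟩ := hchar 0 (by omega) hm1
    ext x
    have hx := x.2
    simp only [Set.mem_insert_iff, Set.mem_singleton_iff]
    constructor
    · intro hxF
      rcases (show x.val = 0 ∨ x.val = 1 ∨ x.val = 2 by omega) with h | h | h
      · exact Or.inl (Fin.ext (show x.val = 0 from h))
      · exact absurd (⟨by omega, by
          have : x = (⟨1, by omega⟩ : Fin 3) := Fin.ext (show x.val = 1 from h)
          rwa [← this]⟩ : Mem' 3 F 1) hm1
      · exact Or.inr (Fin.ext (show x.val = 2 from h))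
    · rintro (rfl | rfl)
      · exact hm0.2
      · exact hm2.2
  · rintro rfl
    refine ⟨⟨⟨by omega, Set.mem_insert _ _⟩, fun k hk hnm => ?_⟩, fun k htrip => ?_⟩
    · rcases k with _ | _ | k
      · exact ⟨⟨by omega, Set.mem_insert _ _⟩,
          ⟨by omega, Set.mem_insert_iff.2 (Or.inr rfl)⟩⟩
      · exact absurd (⟨by omega, Set.mem_insert_iff.2 (Or.inr rfl)⟩ :
          Mem' 3 _ 2) hnm
      · omega
    · obtain ⟨-, hb, hc⟩ := htrip
      have hk0 : k = 0 := by have := mem'_lt hc; omega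
      subst hk0
      obtain ⟨hlt, hm⟩ := hb
      simp only [Set.mem_insert_iff, Set.mem_singleton_iff, Fin.ext_iff] at hm
      omega


theorem stmt_1 :
    (∀ n : ℕ, 4 ≤ n →
      numMinForts (SimpleGraph.pathGraph n) =
        numMinForts (SimpleGraph.pathGraph (n - 2)) +
          numMinForts (SimpleGraph.pathGraph (n - 3))) ∧
    numMinForts (SimpleGraph.pathGraph 1) = 1 ∧
    numMinForts (SimpleGraph.pathGraph 2) = 1 ∧
    numMinForts (SimpleGraph.pathGraph 3) = 1 := by
  refine ⟨fun n hn => ?_, ?_, ?_, ?_⟩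
  · rw [numMinForts_eq, numMinForts_eq, numMinForts_eq, minchar_ncard_rec hn]
  · rw [numMinForts_eq, minchar_one, Set.ncard_singleton]
  · rw [numMinForts_eq, minchar_two, Set.ncard_singleton]
  · rw [numMinForts_eq, minchar_three, Set.ncard_singleton]
end

section
/- Let ψ be the unique real root of z³ − z − 1 = 0 and let k₁ = ψ⁴/(2ψ+3). For every integer n ≥ 1, the sequence a satisfies k₁·ψⁿ − 1 < a(n) < k₁·ψⁿ + 1. -/
set_option maxHeartbeats 800000

theorem stmt_2 (ψ : ℝ) (hψ : ψ ^ 3 - ψ - 1 = 0)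
    (a : ℕ → ℕ) (h1 : a 1 = 1) (h2 : a 2 = 1) (h3 : a 3 = 1)
    (hrec : ∀ n : ℕ, 4 ≤ n → a n = a (n - 2) + a (n - 3)) :
    ∀ n : ℕ, 1 ≤ n →
      ψ ^ 4 / (2 * ψ + 3) * ψ ^ n - 1 < (a n : ℝ) ∧
      (a n : ℝ) < ψ ^ 4 / (2 * ψ + 3) * ψ ^ n + 1 := by
  have hlo : 1.32 < ψ := by nlinarith [sq_nonneg (ψ + 0.66), sq_nonneg ψ, sq_nonneg (ψ - 1.32), sq_nonneg (ψ + 1)]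
  have hhi : ψ < 1.33 := by nlinarith [sq_nonneg (ψ + 0.665), sq_nonneg ψ, sq_nonneg (ψ - 1.33), sq_nonneg (ψ + 1)]
  have h23 : (0:ℝ) < 2 * ψ + 3 := by linarith
  have h4 : ψ ^ 4 = ψ ^ 2 + ψ := by linear_combination ψ * hψ
  set E : ℕ → ℝ := fun n => (2 * ψ + 3) * (a n : ℝ) - ψ ^ (n + 4) with hE
  -- cubic recurrence for E
  have hcube : ∀ n, 1 ≤ n → E (n + 3) = E (n + 1) + E n := by
    intro n hn
    have hr : a (n + 3) = a (n + 1) + a n := by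
      have := hrec (n + 3) (by omega)
      simpa using this
    have hp : ψ ^ (n + 3 + 4) = ψ ^ (n + 1 + 4) + ψ ^ (n + 4) := by
      have : ψ ^ (n + 3 + 4) = ψ ^ (n + 4) * ψ ^ 3 := by ring
      rw [this]
      have h3' : ψ ^ 3 = ψ + 1 := by linarith
      rw [h3']; ring
    simp only [hE, hr]
    push_cast
    linarith [hp]
  have hE1 : E 1 = ψ + 2 - ψ ^ 2 := by
    simp only [hE, h1]
    push_cast
    linear_combination (-(ψ^2) - 1) * hψ
  have hE2 : E 2 = 2 - ψ ^ 2 := by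
    simp only [hE, h2]
    push_cast
    linear_combination (-(ψ^3) - ψ - 1) * hψ
  -- quadratic recurrence
  have hquad : ∀ n, 1 ≤ n → ψ * E (n + 2) + ψ ^ 2 * E (n + 1) + E n = 0 := by
    intro n hn
    induction n, hn using Nat.le_induction with
    | base =>
      simp only [hE, h1, h2, h3]
      push_cast
      linear_combination (-2*ψ^5 - 2*ψ^3 - 3*ψ^2 - 2*ψ - 3) * hψ
    | succ m hm ih =>
      have hc : E (m + 3) = E (m + 1) + E m := hcube m hm
      have : (m + 1) + 2 = m + 3 := rfl
      rw [this]
      linear_combination ψ * hc + ψ * ih - E (m + 1) * hψ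
  set Q : ℕ → ℝ := fun n => ψ * (E (n + 1)) ^ 2 + ψ ^ 2 * E (n + 1) * E n + (E n) ^ 2 with hQ
  have hQpos : ∀ n, 0 ≤ Q n := by
    intro n
    have h44 : 0 < 4 * ψ - ψ ^ 4 := by nlinarith
    simp only [hQ]
    nlinarith [sq_nonneg (2 * E n + ψ ^ 2 * E (n + 1)), mul_nonneg h44.le (sq_nonneg (E (n + 1)))]
  have hQstep : ∀ n, 1 ≤ n → ψ * Q (n + 1) = Q n := by
    intro n hn
    have hq := hquad n hn
    simp only [hQ]
    linear_combination (ψ * E (n + 2) - E n) * hq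
  have hQmono : ∀ n, 1 ≤ n → Q n ≤ Q 1 := by
    intro n hn
    induction n, hn using Nat.le_induction with
    | base => exact le_refl _
    | succ m hm ih =>
      have h1' := hQstep m hm
      have h2' := hQpos (m + 1)
      nlinarith
  have hkey : 4 * Q 1 < (4 * ψ - ψ ^ 4) * (2 * ψ + 3) ^ 2 := by
    simp only [hQ]
    rw [hE1, hE2]
    nlinarith [sq_nonneg ψ, sq_nonneg (ψ - 1.325)]
  have hmain : ∀ n, 1 ≤ n → (E n) ^ 2 < (2 * ψ + 3) ^ 2 := by
    intro n hn
    match n, hn with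
    | 1, _ =>
      rw [hE1]; nlinarith
    | (m + 2), _ =>
      have hm : 1 ≤ m + 1 := by omega
      have hq := hQmono (m + 1) hm
      have hp := hQpos (m + 1)
      have hlow : (4 * ψ - ψ ^ 4) * (E (m + 2)) ^ 2 ≤ 4 * Q (m + 1) := by
        simp only [hQ]
        nlinarith [sq_nonneg (2 * E (m + 1) + ψ ^ 2 * E (m + 2))]
      have hpos4 : 0 < 4 * ψ - ψ ^ 4 := by nlinarith
      have : (4 * ψ - ψ ^ 4) * (E (m + 2)) ^ 2 < (4 * ψ - ψ ^ 4) * (2 * ψ + 3) ^ 2 := by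
        calc (4 * ψ - ψ ^ 4) * (E (m + 2)) ^ 2 ≤ 4 * Q (m + 1) := hlow
        _ ≤ 4 * Q 1 := by linarith
        _ < (4 * ψ - ψ ^ 4) * (2 * ψ + 3) ^ 2 := hkey
      exact lt_of_mul_lt_mul_left this (le_of_lt hpos4)
  intro n hn
  have hsq := hmain n hn
  have hub : E n < 2 * ψ + 3 := by nlinarith [sq_nonneg (E n - (2 * ψ + 3))]
  have hlb : -(2 * ψ + 3) < E n := by nlinarith [sq_nonneg (E n + (2 * ψ + 3))]
  have hEn : E n = (2 * ψ + 3) * (a n : ℝ) - ψ ^ (n + 4) := rfl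
  have hpow : ψ ^ (n + 4) = ψ ^ 4 * ψ ^ n := by ring
  rw [hEn] at hub hlb
  constructor
  · rw [div_mul_eq_mul_div, sub_lt_iff_lt_add, div_lt_iff₀ h23]
    linarith [hlb, hpow]
  · rw [div_mul_eq_mul_div, ← sub_lt_iff_lt_add, lt_div_iff₀ h23]
    linarith [hub, hpow]
end

section
/- For every integer n ≥ 3, the number of minimal forts of the star graph S_n on n vertices equals C(n−1, 2). -/
/-- The star graph on `n` vertices: the vertex `0` (the center) is adjacent to all
other vertices, and there are no other edges. -/
def starGraph (n : ℕ) : SimpleGraph (Fin n) :=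
  SimpleGraph.fromRel (fun i _ => (i : ℕ) = 0)

/-! A leaf outside a fort `F` sees only the centre, so a fort containing the centre is the whole
vertex set, while the forts avoiding the centre are exactly the sets of at least two leaves. For
`n ≥ 3` every fort contains a pair of leaves, which is itself a fort; hence the minimal forts are
precisely the pairs of leaves. -/

theorem Set.ncard_setOf_subset_ncard_eq {α : Type*} {t : Set α} (ht : t.Finite) (k : ℕ) :
    {s : Set α | s ⊆ t ∧ s.ncard = k}.ncard = t.ncard.choose k := by
  lift t to Finset α using ht
  have himage : {s : Set α | s ⊆ t ∧ s.ncard = k} = (↑) '' (t.powersetCard k : Set (Finset α)) := by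
    ext s
    constructor
    · rintro ⟨hst, hk⟩
      obtain ⟨u, rfl⟩ := (t.finite_toSet.subset hst).exists_finset_coe
      exact ⟨u, by simp_all⟩
    · rintro ⟨u, hu, rfl⟩
      simp_all [Finset.mem_powersetCard]
  rw [himage, Set.ncard_image_of_injective _ Finset.coe_injective, Set.ncard_coe_finset,
    Finset.card_powersetCard, Set.ncard_coe_finset]

namespace starGraph

variable {n : ℕ} [NeZero n]

theorem adj_iff {a b : Fin n} : (starGraph n).Adj a b ↔ a ≠ b ∧ (a = 0 ∨ b = 0) := by
  simp only [starGraph, SimpleGraph.fromRel_adj, Fin.val_eq_zero_iff]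

theorem neighborSet_of_ne_zero {v : Fin n} (hv : v ≠ 0) : (starGraph n).neighborSet v = {0} := by
  ext
  simp only [SimpleGraph.mem_neighborSet, adj_iff, Set.mem_singleton_iff]
  grind

theorem neighborSet_zero : (starGraph n).neighborSet 0 = {0}ᶜ := by
  ext
  simp only [SimpleGraph.mem_neighborSet, adj_iff, Set.mem_compl_iff, Set.mem_singleton_iff]
  grind

theorem ncard_compl_singleton_zero : ({0}ᶜ : Set (Fin n)).ncard = n - 1 := by
  rw [Set.ncard_compl, Set.ncard_singleton, Nat.card_fin]

theorem neighborSet_zero_inter_of_zero_notMem {F : Set (Fin n)} (h0 : 0 ∉ F) :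
    (starGraph n).neighborSet 0 ∩ F = F := by
  rw [neighborSet_zero, Set.inter_eq_right, Set.subset_compl_singleton_iff]
  exact h0

theorem isFort_iff {F : Set (Fin n)} :
    IsFort (starGraph n) F ↔ (0 ∉ F ∧ 2 ≤ F.ncard) ∨ F = Set.univ := by
  constructor
  · rintro ⟨hne, hF⟩
    by_cases h0 : 0 ∈ F
    · refine .inr (Set.eq_univ_of_forall fun v => by_contra fun hv => hF v hv ?_)
      rw [neighborSet_of_ne_zero (ne_of_mem_of_not_mem h0 hv).symm,
        Set.singleton_inter_of_mem h0, Set.ncard_singleton]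
    · have hF0 := hF 0 h0
      rw [neighborSet_zero_inter_of_zero_notMem h0] at hF0
      have := (Set.ncard_pos F.toFinite).mpr hne
      exact .inl ⟨h0, by omega⟩
  · rintro (⟨h0, h2⟩ | rfl)
    · refine ⟨Set.nonempty_of_ncard_ne_zero (by omega), fun v hv => ?_⟩
      obtain rfl | hv0 := eq_or_ne v 0
      · rw [neighborSet_zero_inter_of_zero_notMem h0]
        omega
      · simp [neighborSet_of_ne_zero hv0, h0]
    · exact ⟨Set.univ_nonempty, fun v hv => absurd (Set.mem_univ v) hv⟩

theorem exists_leaf_pair_subset_of_isFort (hn : 3 ≤ n) {F : Set (Fin n)}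
    (hF : IsFort (starGraph n) F) : ∃ F' ⊆ F, 0 ∉ F' ∧ F'.ncard = 2 := by
  have hleaves : 2 ≤ (F \ {0}).ncard := by
    rcases isFort_iff.mp hF with ⟨h0, h2⟩ | rfl
    · rwa [Set.sdiff_singleton_eq_self h0]
    · rw [← Set.compl_eq_univ_sdiff, ncard_compl_singleton_zero]
      omega
  obtain ⟨F', hF', h2⟩ := Set.exists_subset_card_eq hleaves
  exact ⟨F', hF'.trans Set.sdiff_subset, fun h0 => (hF' h0).2 rfl, h2⟩

theorem isMinimalFort_iff (hn : 3 ≤ n) {F : Set (Fin n)} :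
    IsMinimalFort (starGraph n) F ↔ 0 ∉ F ∧ F.ncard = 2 := by
  constructor
  · rintro ⟨hF, hmin⟩
    obtain ⟨F', hF'F, h0, h2⟩ := exists_leaf_pair_subset_of_isFort hn hF
    have hF'fort : IsFort (starGraph n) F' := isFort_iff.mpr (.inl ⟨h0, h2.ge⟩)
    obtain rfl : F' = F := hF'F.eq_or_ssubset.resolve_right fun h => hmin F' h hF'fort
    exact ⟨h0, h2⟩
  · rintro ⟨h0, h2⟩
    refine ⟨isFort_iff.mpr (.inl ⟨h0, h2.ge⟩), fun F' hF'F hF' => ?_⟩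
    have hlt := Set.ncard_lt_ncard hF'F
    rcases isFort_iff.mp hF' with ⟨-, h2'⟩ | rfl
    · omega
    · exact h0 (hF'F.subset (Set.mem_univ 0))

end starGraph

theorem stmt_3 (n : ℕ) (hn : 3 ≤ n) :
    numMinForts (starGraph n) = (n - 1).choose 2 := by
  have : NeZero n := ⟨by omega⟩
  have hminForts : {F | IsMinimalFort (starGraph n) F} = {F | F ⊆ {0}ᶜ ∧ F.ncard = 2} :=
    Set.ext fun _ =>
      (starGraph.isMinimalFort_iff hn).trans (and_congr_left' Set.subset_compl_singleton_iff.symm)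
  rw [numMinForts, hminForts, Set.ncard_setOf_subset_ncard_eq (Set.toFinite _),
    starGraph.ncard_compl_singleton_zero]
end

section
/- Let k ≥ 2, m ≥ 3, and 0 ≤ p ≤ k be integers, and let T(n,k,m,p) be the rooted tree of height 2 whose root r has k children b₁,…,b_k, where each of b₁,…,b_{k−p} has exactly m leaf children and each of b_{k−p+1},…,b_k has exactly m−1 leaf children (so the total number of vertices is n = 1 + k + km − p). Then the number of minimal forts of T(n,k,m,p) equals m^{k−p}·(m−1)^p + (k−p)·C(m,2) + p·C(m−1,2). -/
/-- The number of children of the `i`-th child `bᵢ` of the root in `T(n,k,m,p)`: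
the first `k - p` of the `bᵢ` have `m` (leaf) children, the remaining `p` have
`m - 1` (leaf) children. -/
def childCount (k m p : ℕ) (i : Fin k) : ℕ := if (i : ℕ) < k - p then m else m - 1

/-- The vertex type of `T(n,k,m,p)`: `none` is the root, `some ⟨i, none⟩` is the
child `bᵢ` of the root, and `some ⟨i, some j⟩` is the `j`-th leaf child of `bᵢ`. -/
abbrev TVertex (k m p : ℕ) : Type :=
  Option ((i : Fin k) × Option (Fin (childCount k m p i)))

/-- The rooted tree `T(n,k,m,p)` of height 2: the root is adjacent to each `bᵢ`,
and each `bᵢ` is adjacent to each of its leaf children. -/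
def Tkmp (k m p : ℕ) : SimpleGraph (TVertex k m p) :=
  SimpleGraph.fromRel (fun x y =>
    (∃ i : Fin k, x = none ∧ y = some ⟨i, none⟩) ∨
    (∃ (i : Fin k) (j : Fin (childCount k m p i)),
      x = some ⟨i, none⟩ ∧ y = some ⟨i, some j⟩))

/-! Work in the height-two tree whose `i`-th branch vertex has `c i ≥ 2` leaves. If a fort `F`
contains two leaves of one branch, those two leaves alone already form a fort. Otherwise each
branch has at most one leaf in `F`; then no branch vertex lies in `F` (a leaf of it outside `F`
would see exactly one neighbour in `F`), so the root lies in `F` and then every branch has a leaf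
in `F`: `F` contains the root together with one leaf per branch, which is again a fort. These
two kinds of forts form an antichain, hence they are exactly the minimal forts, and there are
`∏ c i + ∑ (c i).choose 2` of them. -/

section Forts

variable {V : Type*} {G : SimpleGraph V} {F : Set V}

theorem isFort_iff :
    IsFort G F ↔ F.Nonempty ∧
      ∀ v ∉ F, ∀ w ∈ F, G.Adj v w → ∃ w' ∈ F, G.Adj v w' ∧ w' ≠ w := by
  refine and_congr_right fun _ => forall₂_congr fun v _ => ?_
  simp only [Ne, Set.ncard_eq_one, Set.eq_singleton_iff_unique_mem, Set.mem_inter_iff,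
    SimpleGraph.mem_neighborSet, not_exists, not_and]
  constructor
  · intro h w hw hvw
    by_contra! hne
    exact h w ⟨hvw, hw⟩ fun w' ⟨hvw', hw'⟩ => hne w' hw' hvw'
  · rintro h w ⟨hvw, hw⟩ huniq
    obtain ⟨w', hw', hvw', hne⟩ := h w hw hvw
    exact hne (huniq w' ⟨hvw', hw'⟩)

theorem setOf_isMinimalFort_eq_range {ι : Type*} {e : ι → Set V} (he : ∀ x, IsFort G (e x))
    (hcontains : ∀ F, IsFort G F → ∃ x, e x ⊆ F) (hanti : ∀ x y, e x ⊆ e y → x = y) :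
    {F | IsMinimalFort G F} = Set.range e := by
  ext F
  constructor
  · rintro ⟨hF, hmin⟩
    obtain ⟨x, hx⟩ := hcontains F hF
    exact ⟨x, hx.eq_of_not_ssubset fun hlt => hmin _ hlt (he x)⟩
  · rintro ⟨x, rfl⟩
    refine ⟨he x, fun F' hlt hF' => ?_⟩
    obtain ⟨y, hy⟩ := hcontains F' hF'
    obtain rfl := hanti y x (hy.trans hlt.subset)
    exact hlt.not_subset hy

theorem numMinForts_eq_natCard {ι : Type*} {e : ι → Set V} (he : ∀ x, IsFort G (e x))
    (hcontains : ∀ F, IsFort G F → ∃ x, e x ⊆ F) (hanti : ∀ x y, e x ⊆ e y → x = y) :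
    numMinForts G = Nat.card ι := by
  rw [numMinForts, setOf_isMinimalFort_eq_range he hcontains hanti, ← Set.image_univ,
    Set.ncard_image_of_injective _ fun x y h => hanti x y h.subset, Set.ncard_univ]

end Forts

namespace HeightTwoTree

variable {ι : Type*} (c : ι → ℕ)

abbrev Vertex : Type _ := Option ((i : ι) × Option (Fin (c i)))

def graph : SimpleGraph (Vertex c) :=
  SimpleGraph.fromRel (fun x y =>
    (∃ i, x = none ∧ y = some ⟨i, none⟩) ∨
    (∃ (i : ι) (j : Fin (c i)), x = some ⟨i, none⟩ ∧ y = some ⟨i, some j⟩))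

variable {c}

abbrev branch (i : ι) : Vertex c := some ⟨i, none⟩

abbrev leaf (i : ι) (j : Fin (c i)) : Vertex c := some ⟨i, some j⟩

theorem eq_of_leaf_eq_leaf {i i' : ι} {j : Fin (c i)} {j' : Fin (c i')}
    (h : leaf i j = leaf i' j') : i = i' := by
  simp_all

@[simp] theorem adj_none_iff {v : Vertex c} : (graph c).Adj none v ↔ ∃ i, v = branch i := by
  rcases v with _ | ⟨i, _ | j⟩ <;> simp [graph]

@[simp] theorem adj_branch_iff {i : ι} {v : Vertex c} :
    (graph c).Adj (branch i) v ↔ v = none ∨ ∃ j, v = leaf i j := by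
  rcases v with _ | ⟨i', _ | j'⟩
  · simp [graph]
  all_goals obtain rfl | hi := eq_or_ne i' i <;> [simp [graph]; simp [graph, hi, hi.symm]]

@[simp] theorem adj_leaf_iff {i : ι} {j : Fin (c i)} {v : Vertex c} :
    (graph c).Adj (leaf i j) v ↔ v = branch i := by
  rcases v with _ | ⟨i', _ | j'⟩
  · simp [graph]
  all_goals obtain rfl | hi := eq_or_ne i' i <;> [simp [graph]; simp [graph, hi, hi.symm]]

def transversalFort (f : ∀ i, Fin (c i)) : Set (Vertex c) :=
  insert none (Set.range fun i => leaf i (f i))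

def leafPairFort (i : ι) (s : Finset (Fin (c i))) : Set (Vertex c) :=
  {v | ∃ j ∈ s, v = leaf i j}

section Membership

variable {f : ∀ i, Fin (c i)} {i i' : ι} {j : Fin (c i)} {s : Finset (Fin (c i))}

@[simp] theorem none_mem_transversalFort : none ∈ transversalFort f := Set.mem_insert _ _

@[simp] theorem leaf_mem_transversalFort_iff : leaf i j ∈ transversalFort f ↔ j = f i := by
  simp [transversalFort, eq_comm]

@[simp] theorem none_notMem_leafPairFort : none ∉ leafPairFort i s := by
  simp [leafPairFort]

@[simp] theorem leaf_mem_leafPairFort_iff : leaf i j ∈ leafPairFort i s ↔ j ∈ s := by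
  simp [leafPairFort]

theorem eq_of_leaf_mem_leafPairFort {j : Fin (c i')} (h : leaf i' j ∈ leafPairFort i s) :
    i' = i := by
  obtain ⟨j', -, h⟩ := h
  exact eq_of_leaf_eq_leaf h

end Membership

theorem isFort_transversalFort (f : ∀ i, Fin (c i)) : IsFort (graph c) (transversalFort f) := by
  refine isFort_iff.2 ⟨⟨none, none_mem_transversalFort⟩, fun v _ w hw hvw => ?_⟩
  rcases hw with rfl | ⟨i, rfl⟩
  · obtain ⟨i, rfl⟩ := adj_none_iff.1 hvw.symm
    exact ⟨leaf i (f i), by simp, by simp, by simp⟩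
  · obtain rfl := adj_leaf_iff.1 hvw.symm
    exact ⟨none, by simp, by simp, by simp⟩

theorem isFort_leafPairFort (i : ι) {s : Finset (Fin (c i))} (hs : s.card = 2) :
    IsFort (graph c) (leafPairFort i s) := by
  obtain ⟨j₀, hj₀⟩ := Finset.card_pos.1 (by omega : 0 < s.card)
  refine isFort_iff.2 ⟨⟨leaf i j₀, by simpa⟩, fun v _ w hw hvw => ?_⟩
  obtain ⟨j, hj, rfl⟩ := hw
  obtain rfl := adj_leaf_iff.1 hvw.symm
  obtain ⟨j', hj', hne⟩ := Finset.exists_mem_ne (s := s) (by omega) j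
  exact ⟨leaf i j', by simpa, by simp, by simpa⟩

variable (c) in
abbrev MinFortIndex : Type _ :=
  (∀ i, Fin (c i)) ⊕ Σ i, (Finset.univ : Finset (Fin (c i))).powersetCard 2

def minFort : MinFortIndex c → Set (Vertex c)
  | .inl f => transversalFort f
  | .inr ⟨i, s⟩ => leafPairFort i s

theorem isFort_minFort : ∀ x : MinFortIndex c, IsFort (graph c) (minFort x)
  | .inl f => isFort_transversalFort f
  | .inr ⟨i, s⟩ => isFort_leafPairFort i (Finset.mem_powersetCard.1 s.2).2

theorem eq_of_minFort_subset : ∀ x y : MinFortIndex c, minFort x ⊆ minFort y → x = y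
  | .inl f, .inl g, h => by
    congr
    funext i
    exact leaf_mem_transversalFort_iff.1 (h ((leaf_mem_transversalFort_iff (i := i)).2 rfl))
  | .inl f, .inr ⟨i, s⟩, h => absurd (h none_mem_transversalFort) none_notMem_leafPairFort
  | .inr ⟨i, s⟩, .inl g, h => by
    obtain ⟨a, b, hab, hs⟩ := Finset.card_eq_two.1 (Finset.mem_powersetCard.1 s.2).2
    have ha : leaf i a ∈ transversalFort g := h (by simp [minFort, hs])
    have hb : leaf i b ∈ transversalFort g := h (by simp [minFort, hs])
    simp only [leaf_mem_transversalFort_iff] at ha hb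
    exact absurd (ha.trans hb.symm) hab
  | .inr ⟨i, s⟩, .inr ⟨i', t⟩, h => by
    have hs := (Finset.mem_powersetCard.1 s.2).2
    obtain ⟨j, hj⟩ := Finset.card_pos.1 (by omega : 0 < (s : Finset (Fin (c i))).card)
    obtain rfl := eq_of_leaf_mem_leafPairFort (h (leaf_mem_leafPairFort_iff.2 hj))
    have hst : (s : Finset (Fin (c i))) ⊆ t := fun j hj =>
      leaf_mem_leafPairFort_iff.1 (h (leaf_mem_leafPairFort_iff.2 hj))
    rw [Subtype.ext (Finset.eq_of_subset_of_card_le hst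
      (by rw [hs, (Finset.mem_powersetCard.1 t.2).2]))]

section FortWithoutLeafPair

variable {F : Set (Vertex c)}

theorem branch_notMem_of_isFort (hF : IsFort (graph c) F)
    (hsep : ∀ i (j j' : Fin (c i)), leaf i j ∈ F → leaf i j' ∈ F → j = j')
    {i : ι} (hi : 2 ≤ c i) : branch i ∉ F := by
  intro hbr
  obtain ⟨j, hj⟩ : ∃ j, leaf i j ∉ F := by
    by_contra! hall
    exact absurd (hsep i ⟨0, by omega⟩ ⟨1, by omega⟩ (hall _) (hall _)) (by simp)
  obtain ⟨w, -, hw, hne⟩ := (isFort_iff.1 hF).2 _ hj _ hbr (adj_leaf_iff.2 rfl)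
  exact hne (adj_leaf_iff.1 hw)

theorem none_mem_of_isFort (hF : IsFort (graph c) F)
    (hsep : ∀ i (j j' : Fin (c i)), leaf i j ∈ F → leaf i j' ∈ F → j = j')
    (hbranch : ∀ i, branch i ∉ F) : none ∈ F := by
  by_contra hnone
  obtain ⟨_ | ⟨i, _ | j⟩, hmem⟩ := (isFort_iff.1 hF).1
  · exact hnone hmem
  · exact hbranch i hmem
  obtain ⟨w, hwF, hw, hne⟩ :=
    (isFort_iff.1 hF).2 _ (hbranch i) _ hmem (adj_branch_iff.2 (.inr ⟨j, rfl⟩))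
  obtain rfl | ⟨j', rfl⟩ := adj_branch_iff.1 hw
  · exact hnone hwF
  · exact hne (by rw [hsep i j' j hwF hmem])

theorem exists_leaf_mem_of_isFort (hF : IsFort (graph c) F) (hbranch : ∀ i, branch i ∉ F)
    (hnone : none ∈ F) (i : ι) : ∃ j, leaf i j ∈ F := by
  by_contra! hleaf
  obtain ⟨w, hwF, hw, hne⟩ :=
    (isFort_iff.1 hF).2 _ (hbranch i) _ hnone (adj_branch_iff.2 (.inl rfl))
  obtain rfl | ⟨j, rfl⟩ := adj_branch_iff.1 hw
  · exact hne rfl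
  · exact hleaf j hwF

end FortWithoutLeafPair

theorem exists_minFort_subset (hc : ∀ i, 2 ≤ c i) {F : Set (Vertex c)}
    (hF : IsFort (graph c) F) : ∃ x, minFort x ⊆ F := by
  by_cases hsep : ∀ i (j j' : Fin (c i)), leaf i j ∈ F → leaf i j' ∈ F → j = j'
  · have hbranch i : branch i ∉ F := branch_notMem_of_isFort hF hsep (hc i)
    have hnone : none ∈ F := none_mem_of_isFort hF hsep hbranch
    choose f hf using exists_leaf_mem_of_isFort hF hbranch hnone
    refine ⟨.inl f, ?_⟩
    rintro _ (rfl | ⟨i, rfl⟩)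
    exacts [hnone, hf i]
  · push Not at hsep
    obtain ⟨i, j, j', hj, hj', hne⟩ := hsep
    refine ⟨.inr ⟨i, ⟨{j, j'}, by simp [Finset.card_pair hne]⟩⟩, ?_⟩
    rintro _ ⟨j'', hj'', rfl⟩
    simp only [Finset.mem_insert, Finset.mem_singleton] at hj''
    obtain rfl | rfl := hj'' <;> assumption

variable [Fintype ι]

theorem card_vertex : Fintype.card (Vertex c) = 1 + ∑ i, (c i + 1) := by
  simp [add_comm]

theorem numMinForts_graph (hc : ∀ i, 2 ≤ c i) :
    numMinForts (graph c) = ∏ i, c i + ∑ i, (c i).choose 2 := by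
  rw [numMinForts_eq_natCard isFort_minFort (fun _ => exists_minFort_subset hc)
    eq_of_minFort_subset]
  classical
  simp [Nat.card_eq_fintype_card]

end HeightTwoTree

@[to_additive]
theorem prod_childCount {M : Type*} [CommMonoid M] {k m p : ℕ} (hp : p ≤ k) (g : ℕ → M) :
    ∏ i, g (childCount k m p i) = g m ^ (k - p) * g (m - 1) ^ p := by
  have hlt : (Finset.univ.filter fun i : Fin k => (i : ℕ) < k - p).card = k - p := by
    rw [Fin.card_filter_val_lt]; omega
  have hge : (Finset.univ.filter fun i : Fin k => ¬ (i : ℕ) < k - p).card = p := by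
    rw [Finset.filter_not, Finset.card_sdiff_of_subset (Finset.filter_subset _ _), hlt,
      Finset.card_univ, Fintype.card_fin]
    omega
  simp only [childCount, apply_ite g, Finset.prod_ite, Finset.prod_const, hlt, hge]

theorem tkmp_eq_graph (k m p : ℕ) : Tkmp k m p = HeightTwoTree.graph (childCount k m p) := rfl

theorem stmt_4_general (k m p : ℕ) (hm : 3 ≤ m) (hp : p ≤ k) :
    Fintype.card (TVertex k m p) = 1 + k + k * m - p ∧
    numMinForts (Tkmp k m p) =
      m ^ (k - p) * (m - 1) ^ p + (k - p) * m.choose 2 + p * (m - 1).choose 2 := by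
  have hc i : 2 ≤ childCount k m p i := by unfold childCount; split <;> omega
  constructor
  · rw [HeightTwoTree.card_vertex, sum_childCount hp (· + 1), smul_eq_mul, smul_eq_mul]
    obtain ⟨d, rfl⟩ := Nat.exists_eq_add_of_le hp
    rw [show m - 1 + 1 = m by omega, Nat.add_sub_cancel_left]
    ring_nf
    omega
  · rw [tkmp_eq_graph, HeightTwoTree.numMinForts_graph hc, prod_childCount hp fun n => n,
      sum_childCount hp (·.choose 2), smul_eq_mul, smul_eq_mul, add_assoc]

theorem stmt_4 (k m p : ℕ) (hk : 2 ≤ k) (hm : 3 ≤ m) (hp : p ≤ k) :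
    Fintype.card (TVertex k m p) = 1 + k + k * m - p ∧
    numMinForts (Tkmp k m p) =
      m ^ (k - p) * (m - 1) ^ p + (k - p) * m.choose 2 + p * (m - 1).choose 2 :=
  stmt_4_general k m p hm hp
end

section
/- Let G be a finite simple graph and let F be a minimal fort of G. Then for every vertex f ∈ F, the set (V(G) \ F) ∪ {f} is a zero forcing set of G. -/
/-- The closure of a set `S` of colored vertices under the color-change rule:
a colored vertex with exactly one uncolored neighbor forces that neighbor to
become colored. `ZFClosure G S v` holds iff `v` is eventually colored when
starting from `S`. -/
inductive ZFClosure {V : Type*} (G : SimpleGraph V) (S : Set V) : V → Prop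
  | init (v : V) (hv : v ∈ S) : ZFClosure G S v
  | force (u w : V) (hu : ZFClosure G S u) (hadj : G.Adj u w)
      (hothers : ∀ x : V, G.Adj u x → x ≠ w → ZFClosure G S x) : ZFClosure G S w

/-- `S` is a zero forcing set iff iterating the color-change rule from `S`
eventually colors every vertex. -/
def IsZeroForcingSet {V : Type*} (G : SimpleGraph V) (S : Set V) : Prop :=
  ∀ v : V, ZFClosure G S v

theorem stmt_5 {V : Type*} [Fintype V] (G : SimpleGraph V) (F : Set V)
    (hF : IsMinimalFort G F) (f : V) (hf : f ∈ F) :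
    IsZeroForcingSet G (Fᶜ ∪ {f}) := by
  set S : Set V := Fᶜ ∪ {f} with hS
  set C : Set V := {v | ZFClosure G S v} with hC
  have hSC : S ⊆ C := fun x hx => ZFClosure.init x hx
  have hFC : F ⊆ C := by
    by_contra h
    have hne : (F \ C).Nonempty := by
      rw [Set.not_subset] at h
      obtain ⟨x, hx1, hx2⟩ := h
      exact ⟨x, hx1, hx2⟩
    have hssub : F \ C ⊂ F := by
      constructor
      · exact Set.diff_subset
      · intro hsub
        have hfm : f ∈ F \ C := hsub hf
        exact hfm.2 (hSC (Or.inr rfl))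
    have hnotfort := hF.2 _ hssub
    rw [IsFort, not_and_or] at hnotfort
    rcases hnotfort with h1 | h2
    · exact h1 hne
    push_neg at h2
    obtain ⟨v, hvnot, hvcard⟩ := h2
    have hvC : v ∈ C := by
      by_cases hvF : v ∈ F
      · by_contra hvc; exact hvnot ⟨hvF, hvc⟩
      · exact hSC (Or.inl hvF)
    obtain ⟨w, hw⟩ := Set.ncard_eq_one.mp hvcard
    have hwmem : w ∈ G.neighborSet v ∩ (F \ C) := by rw [hw]; rfl
    have hwC : ZFClosure G S w := by
      refine ZFClosure.force v w hvC hwmem.1 ?_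
      intro x hadj hxw
      by_cases hxF : x ∈ F \ C
      · have hxmem : x ∈ ({w} : Set V) := hw ▸ (⟨hadj, hxF⟩ : x ∈ G.neighborSet v ∩ (F \ C))
        exact absurd hxmem hxw
      · by_cases hxF' : x ∈ F
        · by_contra hxc
          exact hxF ⟨hxF', hxc⟩
        · exact hSC (Or.inl hxF')
    exact hwmem.2.2 hwC
  intro v
  by_cases hvF : v ∈ F
  · exact hFC hvF
  · exact hSC (Or.inl hvF)
end

section
/- Let G be a finite connected simple graph and let v be a cut-vertex of G, with G₁, G₂, …, G_c the connected components of G − v. Then for any minimal fort F of G with v ∉ F, at most two of the components G_i satisfy V(G_i) ∩ F ≠ ∅. -/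
theorem stmt_6 {V : Type*} [Fintype V] (G : SimpleGraph V) (hG : G.Connected)
    (v : V) (hcut : ¬ (G.induce ({v}ᶜ : Set V)).Connected)
    (F : Set V) (hF : IsMinimalFort G F) (hv : v ∉ F) :
    {C : (G.induce ({v}ᶜ : Set V)).ConnectedComponent |
      ∃ u : ({v}ᶜ : Set V),
        (G.induce ({v}ᶜ : Set V)).connectedComponentMk u = C ∧ (u : V) ∈ F}.ncard ≤ 2 := by
  classical
  by_contra hlt
  push_neg at hlt
  set H : SimpleGraph ({v}ᶜ : Set V) := G.induce ({v}ᶜ : Set V) with hHdef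
  set S : Set H.ConnectedComponent :=
    {C | ∃ u : ({v}ᶜ : Set V), H.connectedComponentMk u = C ∧ (u : V) ∈ F} with hSdef
  have hmem : ∀ x : V, x ≠ v → x ∈ ({v}ᶜ : Set V) := fun x hx => hx
  set K : (x : V) → x ≠ v → H.ConnectedComponent :=
    fun x hx => H.connectedComponentMk ⟨x, hmem x hx⟩ with hKdef
  have adjK : ∀ (x y : V) (hx : x ≠ v) (hy : y ≠ v), G.Adj x y → K x hx = K y hy := by
    intro x y hx hy hadj
    apply SimpleGraph.ConnectedComponent.sound
    exact SimpleGraph.Adj.reachable hadj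
  set FC : H.ConnectedComponent → Set V :=
    fun C => {x | ∃ hx : x ≠ v, K x hx = C ∧ x ∈ F} with hFCdef
  have FCsub : ∀ C, FC C ⊆ F := by
    rintro C x ⟨hx, _, hxF⟩; exact hxF
  have FCcomp : ∀ C (x : V) (hx : x ≠ v), x ∈ FC C → K x hx = C := by
    rintro C x hx ⟨hx', h1, _⟩; exact h1
  have memFC : ∀ C (x : V) (hx : x ≠ v), K x hx = C → x ∈ F → x ∈ FC C := by
    intro C x hx h1 h2; exact ⟨hx, h1, h2⟩
  have nbF : ∀ (u : V) (hu : u ≠ v), G.neighborSet u ∩ F ⊆ FC (K u hu) := by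
    rintro u hu x ⟨hadj, hxF⟩
    have hx : x ≠ v := fun h => hv (h ▸ hxF)
    exact ⟨hx, (adjK u x hu hx hadj).symm, hxF⟩
  have nbF' : ∀ (u : V) (hu : u ≠ v) (C : H.ConnectedComponent), K u hu ≠ C →
      G.neighborSet u ∩ FC C = ∅ := by
    intro u hu C hne
    ext x
    simp only [Set.mem_inter_iff, Set.mem_empty_iff_false, iff_false]
    rintro ⟨hadj, hxC⟩
    obtain ⟨hx, hKx, hxF⟩ := hxC
    exact hne ((adjK u x hu hx hadj).trans hKx)
  have nbFeq : ∀ (u : V) (hu : u ≠ v), G.neighborSet u ∩ FC (K u hu) = G.neighborSet u ∩ F := by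
    intro u hu
    apply Set.Subset.antisymm
    · exact Set.inter_subset_inter_right _ (FCsub _)
    · intro x hx; exact ⟨hx.1, nbF u hu hx⟩
  have hSne : ∀ C, C ∈ S → (FC C).Nonempty := by
    rintro C ⟨u, hu1, hu2⟩
    exact ⟨(u : V), u.property, hu1, hu2⟩
  have hfinS : S.Finite := Set.toFinite S
  -- three distinct components meeting F
  obtain ⟨C₁, C₂, C₃, hC₁, hC₂, hC₃, h12, h13, h23⟩ := (Set.two_lt_ncard_iff hfinS).mp hlt
  -- Step 1: if FC C is nonempty and some other component also meets F, then
  -- v has exactly one neighbor in FC C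
  have step1 : ∀ C C', C ∈ S → C' ∈ S → C ≠ C' →
      (G.neighborSet v ∩ FC C).ncard = 1 := by
    intro C C' hCS hC'S hne
    have hneFC : (FC C).Nonempty := hSne C hCS
    have hssub : FC C ⊂ F := by
      refine ⟨FCsub C, fun hsub => ?_⟩
      obtain ⟨y, hy⟩ := hSne C' hC'S
      have : y ∈ FC C := hsub (FCsub C' hy)
      obtain ⟨hyv, hyK, _⟩ := this
      exact hne ((FCcomp C' y hyv hy) ▸ hyK.symm ▸ rfl)
    have hnotfort := hF.2 (FC C) hssub
    rw [IsFort, not_and] at hnotfort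
    push_neg at hnotfort
    obtain ⟨u, huFC, hucard⟩ := hnotfort hneFC
    by_cases huv : u = v
    · exact huv ▸ hucard
    · exfalso
      by_cases hKu : K u huv = C
      · have huF : u ∉ F := fun h => huFC (memFC C u huv hKu h)
        rw [← hKu, nbFeq u huv] at hucard
        exact hF.1.2 u huF hucard
      · rw [nbF' u huv C hKu] at hucard
        simp at hucard
  have hc2 : (G.neighborSet v ∩ FC C₂).ncard = 1 := step1 C₂ C₃ hC₂ hC₃ h23
  have hc3 : (G.neighborSet v ∩ FC C₃).ncard = 1 := step1 C₃ C₂ hC₃ hC₂ h23.symm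
  -- Step 2: F \ FC C₁ is a fort, contradiction
  set F' : Set V := F \ FC C₁ with hF'def
  have hF'ssub : F' ⊂ F := by
    refine ⟨Set.diff_subset, fun hsub => ?_⟩
    obtain ⟨y, hy⟩ := hSne C₁ hC₁
    exact (hsub (FCsub C₁ hy)).2 hy
  apply hF.2 F' hF'ssub
  -- FC C₂ ⊆ F' and FC C₃ ⊆ F'
  have hsub2 : ∀ C, C ≠ C₁ → FC C ⊆ F' := by
    rintro C hne x ⟨hx, hKx, hxF⟩
    refine ⟨hxF, fun hx1 => ?_⟩
    exact hne ((FCcomp C₁ x hx hx1) ▸ hKx ▸ rfl)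
  constructor
  · obtain ⟨y, hy⟩ := hSne C₂ hC₂
    exact ⟨y, hsub2 C₂ h12.symm hy⟩
  · intro u huF'
    by_cases huv : u = v
    · -- v has at least two neighbors in F'
      rw [huv]
      obtain ⟨x₂, hx₂⟩ := Set.nonempty_of_ncard_ne_zero (by omega : (G.neighborSet v ∩ FC C₂).ncard ≠ 0)
      obtain ⟨x₃, hx₃⟩ := Set.nonempty_of_ncard_ne_zero (by omega : (G.neighborSet v ∩ FC C₃).ncard ≠ 0)
      have hx₂v : x₂ ≠ v := fun h => hv (h ▸ FCsub C₂ hx₂.2)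
      have hx₃v : x₃ ≠ v := fun h => hv (h ▸ FCsub C₃ hx₃.2)
      have hne23 : x₂ ≠ x₃ := by
        intro h
        subst h
        exact h23 ((FCcomp C₂ x₂ hx₂v hx₂.2).symm.trans (FCcomp C₃ x₂ hx₂v hx₃.2))
      intro hcard
      obtain ⟨a, ha⟩ := Set.ncard_eq_one.mp hcard
      have m2 : x₂ ∈ G.neighborSet v ∩ F' := ⟨hx₂.1, hsub2 C₂ h12.symm hx₂.2⟩
      have m3 : x₃ ∈ G.neighborSet v ∩ F' := ⟨hx₃.1, hsub2 C₃ h13.symm hx₃.2⟩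
      rw [ha] at m2 m3
      exact hne23 (m2.trans m3.symm)
    · by_cases hKu : K u huv = C₁
      · have : G.neighborSet u ∩ F' = ∅ := by
          ext x
          simp only [Set.mem_inter_iff, Set.mem_empty_iff_false, iff_false]
          rintro ⟨hadj, hxF, hxC1⟩
          exact hxC1 (hKu ▸ nbF u huv ⟨hadj, hxF⟩)
        rw [this]
        simp
      · have huF : u ∉ F := by
          intro huF
          exact huF' ⟨huF, fun h => hKu (FCcomp C₁ u huv h)⟩
        have : G.neighborSet u ∩ F' = G.neighborSet u ∩ F := by
          apply Set.Subset.antisymm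
          · exact Set.inter_subset_inter_right _ Set.diff_subset
          · rintro x ⟨hadj, hxF⟩
            have hxK := nbF u huv ⟨hadj, hxF⟩
            refine ⟨hadj, hxF, fun hx1 => ?_⟩
            have hx : x ≠ v := fun h => hv (h ▸ hxF)
            exact hKu ((FCcomp (K u huv) x hx hxK).symm.trans (FCcomp C₁ x hx hx1))
        rw [this]
        exact hF.1.2 u huF
end

section
/- Let T be a finite tree and let F be a minimal fort of T. Then there do not exist three distinct vertices a, b, c ∈ F and a vertex u of T such that a, b, c all lie in the closed neighborhood N(u) ∪ {u}; equivalently, for every vertex u of T, the closed neighborhood of u contains either zero or exactly two vertices of F. -/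
open SimpleGraph

private lemma branch_self {V : Type*} {G : SimpleGraph V} {u x : V} (h : u ≠ x) :
    ∃ p : G.Walk x x, u ∉ p.support := ⟨Walk.nil, by simpa using h⟩

private lemma branch_extend {V : Type*} {G : SimpleGraph V} {u x v w : V}
    (hv : ∃ p : G.Walk x v, u ∉ p.support) (hvw : G.Adj v w) (hw : w ≠ u) :
    ∃ p : G.Walk x w, u ∉ p.support := by
  obtain ⟨p, hp⟩ := hv
  refine ⟨p.append (Walk.cons hvw Walk.nil), ?_⟩
  rw [Walk.support_append]
  simp only [List.mem_append, Walk.support_cons, Walk.support_nil, List.tail_cons,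
    List.mem_singleton]
  rintro (h | rfl)
  · exact hp h
  · exact hw rfl

private lemma branch_not_u {V : Type*} {G : SimpleGraph V} {u x : V} :
    ¬ ∃ p : G.Walk x u, u ∉ p.support := by
  rintro ⟨p, hp⟩
  exact hp p.end_mem_support

private lemma branch_adj_u {V : Type*} [DecidableEq V] {G : SimpleGraph V} (hac : G.IsAcyclic)
    {u x v : V} (hux : G.Adj u x) (hv : ∃ p : G.Walk x v, u ∉ p.support)
    (hvu : G.Adj u v) : v = x := by
  obtain ⟨p, hp⟩ := hv
  have hq : u ∉ (p.toPath : G.Walk x v).support := fun h => hp (p.support_toPath_subset h)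
  have h1 : (Walk.cons hvu Walk.nil : G.Walk u v).IsPath := by
    simp [Walk.cons_isPath_iff, hvu.ne]
  have h2 : (Walk.cons hux (p.toPath : G.Walk x v)).IsPath := p.toPath.2.cons hq
  have heq := hac.path_unique ⟨_, h1⟩ ⟨_, h2⟩
  have hlen : (Walk.cons hvu (Walk.nil : G.Walk v v)).length
      = (Walk.cons hux (p.toPath : G.Walk x v)).length := by
    have := congrArg (fun q : G.Path u v => (q : G.Walk u v).length) heq
    simpa using this
  simp only [Walk.length_cons, Walk.length_nil] at hlen
  exact (Walk.eq_of_length_eq_zero (by omega : (p.toPath : G.Walk x v).length = 0)).symm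

theorem stmt_7 {V : Type*} [Fintype V] (G : SimpleGraph V) (hT : G.IsTree)
    (F : Set V) (hF : IsMinimalFort G F) :
    ¬ ∃ (a b c : V) (u : V), a ∈ F ∧ b ∈ F ∧ c ∈ F ∧
      a ≠ b ∧ a ≠ c ∧ b ≠ c ∧
      a ∈ insert u (G.neighborSet u) ∧
      b ∈ insert u (G.neighborSet u) ∧
      c ∈ insert u (G.neighborSet u) := by
  classical
  rintro ⟨a, b, c, u, ha, hb, hc, hab, hac, hbc, hau, hbu, hcu⟩
  have hacyc := hT.IsAcyclic
  have key : ∀ x y z : V, x ∈ F → y ∈ F → z ∈ F → x ≠ y → z ≠ x → z ≠ y →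
      G.Adj u x → G.Adj u y → z ∈ insert u (G.neighborSet u) → False := by
    intro x y z hx hy hz hxy hzx hzy hux huy hzu
    set X : Set V := {w | ∃ p : G.Walk x w, u ∉ p.support} with hXdef
    set Y : Set V := {w | ∃ p : G.Walk y w, u ∉ p.support} with hYdef
    have memX : x ∈ X := branch_self hux.ne
    have memY : y ∈ Y := branch_self huy.ne
    set F' : Set V := F ∩ (X ∪ Y) with hF'def
    have hxF' : x ∈ F' := ⟨hx, Or.inl memX⟩
    have hyF' : y ∈ F' := ⟨hy, Or.inr memY⟩
    have hfort : IsFort G F' := by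
      refine ⟨⟨x, hxF'⟩, ?_⟩
      intro v hv
      by_cases hvu : v = u
      · subst hvu
        have hset : G.neighborSet v ∩ F' = {x, y} := by
          ext w
          constructor
          · rintro ⟨hw1, _, (hwX | hwY)⟩
            · exact Or.inl (branch_adj_u hacyc hux hwX hw1)
            · exact Or.inr (branch_adj_u hacyc huy hwY hw1)
          · rintro (rfl | rfl)
            · exact ⟨hux, hxF'⟩
            · exact ⟨huy, hyF'⟩
        rw [hset, Set.ncard_pair hxy]
        omega
      · -- v ≠ u
        rcases Classical.em (v ∈ X ∪ Y) with hvXY | hvXY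
        · -- v in a branch but not in F
          have hvF : v ∉ F := fun h => hv ⟨h, hvXY⟩
          have hnadj : ¬ G.Adj v u := by
            intro hadj
            rcases hvXY with hvX | hvY
            · exact hv (branch_adj_u hacyc hux hvX hadj.symm ▸ hxF')
            · exact hv (branch_adj_u hacyc huy hvY hadj.symm ▸ hyF')
          have hset : G.neighborSet v ∩ F' = G.neighborSet v ∩ F := by
            apply Set.Subset.antisymm
            · exact Set.inter_subset_inter_right _ Set.inter_subset_left
            · rintro w ⟨hw1, hw2⟩
              have hwu : w ≠ u := fun h => hnadj (h ▸ hw1)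
              refine ⟨hw1, hw2, ?_⟩
              rcases hvXY with hvX | hvY
              · exact Or.inl (branch_extend hvX hw1 hwu)
              · exact Or.inr (branch_extend hvY hw1 hwu)
          rw [hset]
          exact hF.1.2 v hvF
        · -- v outside both branches and ≠ u
          have hset : G.neighborSet v ∩ F' = ∅ := by
            ext w
            simp only [Set.mem_inter_iff, Set.mem_empty_iff_false, iff_false, not_and]
            rintro hw1 ⟨_, (hwX | hwY)⟩
            · exact hvXY (Or.inl (branch_extend hwX hw1.symm hvu))
            · exact hvXY (Or.inr (branch_extend hwY hw1.symm hvu))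
          rw [hset]
          simp
    have hss : F' ⊂ F := by
      refine ⟨Set.inter_subset_left, fun hsub => ?_⟩
      have hzF' : z ∈ F' := hsub hz
      rcases hzF'.2 with hzX | hzY
      · rcases hzu with rfl | hzadj
        · exact branch_not_u ⟨_, (hzX : ∃ p : G.Walk x z, z ∉ p.support).choose_spec⟩
        · exact hzx (branch_adj_u hacyc hux hzX hzadj)
      · rcases hzu with rfl | hzadj
        · exact branch_not_u ⟨_, (hzY : ∃ p : G.Walk y z, z ∉ p.support).choose_spec⟩
        · exact hzy (branch_adj_u hacyc huy hzY hzadj)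
    exact hF.2 F' hss hfort
  by_cases h1 : a = u
  · exact key b c a hb hc ha hbc hab hac
      ((Set.mem_insert_iff.1 hbu).resolve_left (h1 ▸ hab.symm)) 
      ((Set.mem_insert_iff.1 hcu).resolve_left (h1 ▸ hac.symm)) hau
  · by_cases h2 : b = u
    · exact key a c b ha hc hb hac hab.symm hbc
        ((Set.mem_insert_iff.1 hau).resolve_left (h2 ▸ hab))
        ((Set.mem_insert_iff.1 hcu).resolve_left (h2 ▸ hbc.symm)) hbu
    · exact key a b c ha hb hc hab hac.symm hbc.symm
        ((Set.mem_insert_iff.1 hau).resolve_left h1)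
        ((Set.mem_insert_iff.1 hbu).resolve_left h2) hcu
end

section
/- Let T be a finite tree and let F be a minimal fort of T. Then F does not contain three vertices a, b, c with a adjacent to b and b adjacent to c. -/
/-- The graph `G` with all edges incident to `b` removed. -/
def avoidG {V : Type*} (G : SimpleGraph V) (b : V) : SimpleGraph V where
  Adj x y := G.Adj x y ∧ x ≠ b ∧ y ≠ b
  symm := ⟨fun x y ⟨h, hx, hy⟩ => ⟨h.symm, hy, hx⟩⟩
  loopless := ⟨fun x ⟨h, _, _⟩ => h.ne rfl⟩

lemma avoidG_support {V : Type*} {G : SimpleGraph V} {b x y : V}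
    (w : (avoidG G b).Walk x y) (hx : x ≠ b) : b ∉ w.support := by
  induction w with
  | nil => simp [Ne.symm hx]
  | cons h p ih =>
    simp only [SimpleGraph.Walk.support_cons, List.mem_cons, not_or]
    exact ⟨Ne.symm hx, ih h.2.2⟩

lemma avoidG_ne {V : Type*} {G : SimpleGraph V} {b x y : V}
    (h : (avoidG G b).Reachable x y) (hx : x ≠ b) : y ≠ b := by
  obtain ⟨w⟩ := h
  intro he
  exact avoidG_support w hx (he ▸ w.end_mem_support)

lemma avoidG_reach_adj {V : Type*} {G : SimpleGraph V} {b a x y : V}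
    (hr : (avoidG G b).Reachable a x) (hadj : G.Adj x y) (hx : x ≠ b) (hy : y ≠ b) :
    (avoidG G b).Reachable a y :=
  hr.trans (SimpleGraph.Adj.reachable ⟨hadj, hx, hy⟩)

lemma avoidG_le {V : Type*} (G : SimpleGraph V) (b : V) : avoidG G b ≤ G :=
  fun _ _ h => h.1

/-- From a reachability in `avoidG G b` from `a ≠ b`, get a `G`-path avoiding `b`. -/
lemma avoidG_path {V : Type*} {G : SimpleGraph V} {b a u : V}
    (hr : (avoidG G b).Reachable a u) (ha : a ≠ b) :
    ∃ q : G.Walk a u, q.IsPath ∧ b ∉ q.support := by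
  classical
  obtain ⟨w⟩ := hr
  have hedges : ∀ e ∈ w.bypass.edges, e ∈ G.edgeSet := fun e he =>
    SimpleGraph.edgeSet_mono (avoidG_le G b) (w.bypass.edges_subset_edgeSet he)
  refine ⟨w.bypass.transfer G hedges, w.bypass_isPath.transfer hedges, ?_⟩
  rw [SimpleGraph.Walk.support_transfer]
  exact avoidG_support w.bypass ha

lemma tree_not_reach {V : Type*} {G : SimpleGraph V} (hT : G.IsTree) {a b c : V}
    (hba : G.Adj b a) (hbc : G.Adj b c) (hac : a ≠ c) :
    ¬ (avoidG G b).Reachable a c := by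
  intro hr
  obtain ⟨q, hq, hbq⟩ := avoidG_path hr hba.ne'
  have hbcne : b ≠ c := hbc.ne
  have r : G.Walk a c := SimpleGraph.Walk.cons hba.symm (SimpleGraph.Walk.cons hbc SimpleGraph.Walk.nil)
  have hr2 : (SimpleGraph.Walk.cons hba.symm (SimpleGraph.Walk.cons hbc SimpleGraph.Walk.nil) : G.Walk a c).IsPath := by
    rw [SimpleGraph.Walk.cons_isPath_iff, SimpleGraph.Walk.cons_isPath_iff]
    refine ⟨⟨SimpleGraph.Walk.IsPath.nil, by simp [hbcne]⟩, by simp [hba.ne', hac]⟩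
  obtain ⟨p0, _, hun⟩ := hT.existsUnique_path a c
  have := (hun q hq).trans (hun _ hr2).symm
  apply hbq
  rw [this]
  simp

lemma tree_unique_nbr {V : Type*} {G : SimpleGraph V} (hT : G.IsTree) {a b u : V}
    (hba : G.Adj b a) (hbu : G.Adj b u) (hr : (avoidG G b).Reachable a u) : u = a := by
  obtain ⟨q, hq, hbq⟩ := avoidG_path hr hba.ne'
  have h1 : (SimpleGraph.Walk.cons hbu SimpleGraph.Walk.nil : G.Walk b u).IsPath := by
    rw [SimpleGraph.Walk.cons_isPath_iff]; exact ⟨SimpleGraph.Walk.IsPath.nil, by simp [hbu.ne]⟩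
  have h2 : (SimpleGraph.Walk.cons hba q : G.Walk b u).IsPath := by
    rw [SimpleGraph.Walk.cons_isPath_iff]; exact ⟨hq, hbq⟩
  obtain ⟨p0, _, hun⟩ := hT.existsUnique_path b u
  have heq := (hun _ h1).trans (hun _ h2).symm
  have hsup := congrArg SimpleGraph.Walk.support heq
  rw [SimpleGraph.Walk.support_cons, SimpleGraph.Walk.support_cons,
    q.support_eq_cons] at hsup
  simp only [SimpleGraph.Walk.support_nil, List.cons.injEq] at hsup
  exact hsup.2.1

theorem stmt_8 {V : Type*} [Fintype V] (G : SimpleGraph V) (hT : G.IsTree)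
    (F : Set V) (hF : IsMinimalFort G F) :
    ¬ ∃ a b c : V, a ∈ F ∧ b ∈ F ∧ c ∈ F ∧ a ≠ c ∧ G.Adj a b ∧ G.Adj b c := by
  rintro ⟨a, b, c, ha, hb, hc, hac, hab, hbc⟩
  have hba : G.Adj b a := hab.symm
  set Ca : Set V := {v | (avoidG G b).Reachable a v} with hCa
  set Cc : Set V := {v | (avoidG G b).Reachable c v} with hCc
  have haCa : a ∈ Ca := SimpleGraph.Reachable.refl a
  have hcCc : c ∈ Cc := SimpleGraph.Reachable.refl c
  have hCane : ∀ v ∈ Ca, v ≠ b := fun v hv => avoidG_ne hv hba.ne'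
  have hCcne : ∀ v ∈ Cc, v ≠ b := fun v hv => avoidG_ne hv hbc.ne'
  have hbCa : b ∉ Ca := fun h => hCane b h rfl
  have hbCc : b ∉ Cc := fun h => hCcne b h rfl
  -- closure of components under adjacency away from b
  have hclosCa : ∀ v ∈ Ca, ∀ u, G.Adj v u → u ≠ b → u ∈ Ca :=
    fun v hv u hadj hu => avoidG_reach_adj hv hadj (hCane v hv) hu
  have hclosCc : ∀ v ∈ Cc, ∀ u, G.Adj v u → u ≠ b → u ∈ Cc :=
    fun v hv u hadj hu => avoidG_reach_adj hv hadj (hCcne v hv) hu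
  -- unique neighbors of b in each component
  have hnbrCa : ∀ u ∈ Ca, G.Adj b u → u = a := fun u hu hadj => tree_unique_nbr hT hba hadj hu
  have hnbrCc : ∀ u ∈ Cc, G.Adj b u → u = c := fun u hu hadj => tree_unique_nbr hT hbc hadj hu
  set F' : Set V := F ∩ (Ca ∪ Cc) with hF'
  have hsub : F' ⊆ F := Set.inter_subset_left
  have hbF' : b ∉ F' := fun h => h.2.elim hbCa hbCc
  have hssub : F' ⊂ F := ⟨hsub, fun h => hbF' (h hb)⟩
  apply hF.2 F' hssub
  constructor
  · exact ⟨a, ha, Or.inl haCa⟩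
  · intro v hv
    by_cases hvb : v = b
    · subst hvb
      have hsub2 : ({a, c} : Set V) ⊆ G.neighborSet v ∩ F' := by
        rintro x (rfl | rfl)
        · exact ⟨hba, ha, Or.inl haCa⟩
        · exact ⟨hbc, hc, Or.inr hcCc⟩
      have h2 : 2 ≤ (G.neighborSet v ∩ F').ncard := by
        calc 2 = ({a, c} : Set V).ncard := (Set.ncard_pair hac).symm
        _ ≤ _ := Set.ncard_le_ncard hsub2 (Set.toFinite _)
      omega
    · by_cases hvCa : v ∈ Ca
      · have hvF : v ∉ F := fun hvF => hv ⟨hvF, Or.inl hvCa⟩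
        have : G.neighborSet v ∩ F' = G.neighborSet v ∩ F := by
          apply Set.Subset.antisymm
          · exact Set.inter_subset_inter_right _ hsub
          · rintro u ⟨hadj, huF⟩
            have hub : u ≠ b := by
              rintro rfl
              exact hvF ((hnbrCa v hvCa hadj.symm) ▸ ha)
            exact ⟨hadj, huF, Or.inl (hclosCa v hvCa u hadj hub)⟩
        rw [this]
        exact hF.1.2 v hvF
      · by_cases hvCc : v ∈ Cc
        · have hvF : v ∉ F := fun hvF => hv ⟨hvF, Or.inr hvCc⟩
          have : G.neighborSet v ∩ F' = G.neighborSet v ∩ F := by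
            apply Set.Subset.antisymm
            · exact Set.inter_subset_inter_right _ hsub
            · rintro u ⟨hadj, huF⟩
              have hub : u ≠ b := by
                rintro rfl
                exact hvF ((hnbrCc v hvCc hadj.symm) ▸ hc)
              exact ⟨hadj, huF, Or.inr (hclosCc v hvCc u hadj hub)⟩
          rw [this]
          exact hF.1.2 v hvF
        · have : G.neighborSet v ∩ F' = ∅ := by
            ext u
            simp only [Set.mem_inter_iff, Set.mem_empty_iff_false, iff_false, not_and]
            rintro hadj ⟨huF, hu | hu⟩
            · exact hvCa (hclosCa u hu v hadj.symm hvb)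
            · exact hvCc (hclosCc u hu v hadj.symm hvb)
          rw [this]
          simp
end

section
/- Let G be a finite connected simple graph and let e = {a, b} be a cut-edge (bridge) of G, and let G_a and G_b be the connected components of G − e containing a and b respectively. Then for any minimal fort F of G with a ∉ F and b ∉ F, either V(G_a) ∩ F = ∅ or V(G_b) ∩ F = ∅. -/
theorem stmt_9 {V : Type*} [Fintype V] (G : SimpleGraph V) (hG : G.Connected)
    (a b : V) (hab : G.Adj a b)
    (hcut : ¬ (G.deleteEdges {s(a, b)}).Connected)
    (F : Set V) (hF : IsMinimalFort G F) (ha : a ∉ F) (hb : b ∉ F) :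
    (∀ u : V, (G.deleteEdges {s(a, b)}).Reachable a u → u ∉ F) ∨
    (∀ u : V, (G.deleteEdges {s(a, b)}).Reachable b u → u ∉ F) := by
  set G' := G.deleteEdges {s(a, b)} with hG'
  -- a and b are not reachable in G'
  have hnab : ¬ G'.Reachable a b := by
    intro hre
    apply hcut
    rw [SimpleGraph.connected_iff]
    refine ⟨fun u v => ?_, hG.nonempty⟩
    have step : ∀ p q : V, G.Adj p q → G'.Reachable p q := by
      intro p q hpq
      by_cases he : s(p, q) = s(a, b)
      · rw [Sym2.eq_iff] at he
        rcases he with ⟨rfl, rfl⟩ | ⟨rfl, rfl⟩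
        · exact hre
        · exact hre.symm
      · exact SimpleGraph.Adj.reachable (by
          rw [hG', SimpleGraph.deleteEdges_adj]
          exact ⟨hpq, by simpa using he⟩)
    have hu : ∀ (x y : V) (w : G.Walk x y), G'.Reachable x y := by
      intro x y w
      induction w with
      | nil => exact SimpleGraph.Reachable.refl _
      | cons h p ih => exact (step _ _ h).trans ih
    exact hu u v (hG.preconnected u v).some
  set A : Set V := {u | G'.Reachable a u} with hA
  -- cross edge lemma
  have cross : ∀ x y : V, G.Adj x y → x ∈ A → y ∉ A → x = a ∧ y = b := by
    intro x y hxy hx hy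
    by_cases he : s(x, y) = s(a, b)
    · rw [Sym2.eq_iff] at he
      rcases he with ⟨rfl, rfl⟩ | ⟨rfl, rfl⟩
      · exact ⟨rfl, rfl⟩
      · exact absurd hx hnab
    · exfalso
      apply hy
      exact hx.trans (SimpleGraph.Adj.reachable (by
        rw [hG', SimpleGraph.deleteEdges_adj]
        exact ⟨hxy, by simpa using he⟩))
  set Fa : Set V := F ∩ A with hFa
  -- For any v ∉ A, the neighbors of v in Fa form the empty set
  have hout : ∀ v : V, v ∉ A → G.neighborSet v ∩ Fa = ∅ := by
    intro v hv
    ext w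
    simp only [Set.mem_empty_iff_false, iff_false]
    rintro ⟨hvw, hwF, hwA⟩
    rcases cross w v (G.adj_symm hvw) hwA hv with ⟨hw1, hv1⟩
    exact ha (hw1 ▸ hwF)
  by_cases hne : Fa.Nonempty
  · -- Fa is a fort
    have hfort : IsFort G Fa := by
      refine ⟨hne, fun v hv => ?_⟩
      by_cases hvA : v ∈ A
      · have hvF : v ∉ F := fun h => hv ⟨h, hvA⟩
        have heq : G.neighborSet v ∩ Fa = G.neighborSet v ∩ F := by
          ext w
          simp only [Set.mem_inter_iff, hFa, SimpleGraph.mem_neighborSet]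
          constructor
          · rintro ⟨h1, h2, _⟩; exact ⟨h1, h2⟩
          · rintro ⟨h1, h2⟩
            refine ⟨h1, h2, ?_⟩
            by_contra hwA
            rcases cross v w h1 hvA hwA with ⟨rfl, rfl⟩
            exact hb h2
        rw [heq]
        exact hF.1.2 v hvF
      · rw [hout v hvA, Set.ncard_empty]
        exact zero_ne_one
    -- By minimality, Fa = F, so F ⊆ A
    have hFaF : Fa = F := by
      by_contra hne'
      exact hF.2 Fa ⟨Set.inter_subset_left, fun hsub =>
        hne' (Set.Subset.antisymm Set.inter_subset_left hsub)⟩ hfort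
    have hFsubA : F ⊆ A := fun x hx => (hFaF ▸ hx : x ∈ Fa).2
    right
    intro u hu huF
    exact hnab ((hFsubA huF).trans hu.symm)
  · left
    intro u hu huF
    exact hne ⟨u, huF, hu⟩
end

section
/- Let T be a finite tree on at least three vertices and let S be a set of vertices of T. Then S is a minimal fort of T if and only if: (I) S contains at least one leaf of T; and (II) for every leaf ℓ ∈ S and every edge {a, b} of T with dist(ℓ, a) < dist(ℓ, b) (where dist denotes graph distance in T): (i) if a ∉ S and b ∉ S, then N(b) ∩ S = ∅; (ii) if a ∉ S and b ∈ S, then |N(b) ∩ S| ≤ 1; (iii) if a ∈ S and b ∉ S, then |(N(b) ∩ S) \ {a}| = 1; (iv) if a ∈ S and b ∈ S, then |(N(b) ∩ S) \ {a}| = 0. -/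
/-- A leaf of a graph: a vertex of degree one. -/
def IsLeaf {V : Type*} (G : SimpleGraph V) (v : V) : Prop :=
  (G.neighborSet v).ncard = 1

open SimpleGraph Set

namespace StmtAux

variable {V : Type*} {G : SimpleGraph V}

lemma path_length_eq_dist (hT : G.IsTree) {u v : V} (p : G.Walk u v) (hp : p.IsPath) :
    p.length = G.dist u v := by
  obtain ⟨q, hq, hql⟩ := hT.isConnected.exists_path_of_dist u v
  have h := hT.existsUnique_path u v
  rw [h.unique hp hq, hql]

lemma dist_mem_support (hT : G.IsTree) {u v w : V} (p : G.Walk u v) (hp : p.IsPath)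
    (hw : w ∈ p.support) : G.dist u w ≤ p.length := by
  classical
  have h1 : (p.takeUntil w hw).length = G.dist u w :=
    path_length_eq_dist hT _ (hp.takeUntil hw)
  have := p.length_takeUntil_le hw
  omega

lemma adj_dist_one (hT : G.IsTree) {a b : V} (hab : G.Adj a b) : G.dist a b = 1 :=
  (SimpleGraph.dist_eq_one_iff_adj).2 hab

/-- In a tree, adjacent vertices have different distances from any vertex. -/
lemma adj_dist_ne (hT : G.IsTree) {a b : V} (hab : G.Adj a b) (u : V) :
    G.dist u a ≠ G.dist u b := by
  classical
  intro hd
  obtain ⟨p, hp, hpl⟩ := hT.isConnected.exists_path_of_dist u a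
  by_cases hb : b ∈ p.support
  · -- split p at b : dist u b + dist b a = p.length
    have h1 : (p.takeUntil b hb).length = G.dist u b :=
      path_length_eq_dist hT _ (hp.takeUntil hb)
    have h2 : (p.dropUntil b hb).length = G.dist b a :=
      path_length_eq_dist hT _ (hp.dropUntil hb)
    have h3 : (p.takeUntil b hb).length + (p.dropUntil b hb).length = p.length := by
      rw [← SimpleGraph.Walk.length_append, p.take_spec hb]
    rw [h1, h2, adj_dist_one hT hab.symm] at h3
    omega
  · -- extend p by edge a-b reversed: path b → u
    have hrev : b ∉ p.reverse.support := by
      rwa [SimpleGraph.Walk.support_reverse, List.mem_reverse]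
    have hq : (SimpleGraph.Walk.cons hab.symm p.reverse).IsPath :=
      (hp.reverse).cons hrev
    have := path_length_eq_dist hT _ hq
    rw [SimpleGraph.Walk.length_cons, SimpleGraph.Walk.length_reverse, hpl] at this
    have hc : G.dist b u = G.dist u b := SimpleGraph.dist_comm
    omega

lemma adj_dist_succ (hT : G.IsTree) {a b : V} (hab : G.Adj a b) (u : V)
    (h : G.dist u a < G.dist u b) : G.dist u b = G.dist u a + 1 := by
  have h2 : G.dist u b ≤ G.dist u a + G.dist a b := hT.isConnected.dist_triangle
  rw [adj_dist_one hT hab] at h2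
  omega

lemma adj_dist_dichotomy (hT : G.IsTree) {a b : V} (hab : G.Adj a b) (u : V) :
    G.dist u a = G.dist u b + 1 ∨ G.dist u b = G.dist u a + 1 := by
  rcases lt_or_gt_of_ne (adj_dist_ne hT hab u) with h | h
  · exact Or.inr (adj_dist_succ hT hab u h)
  · exact Or.inl (adj_dist_succ hT hab.symm u h)

/-- existence of a parent: a neighbor strictly closer to `u`. -/
lemma exists_parent (hT : G.IsTree) {u v : V} (huv : u ≠ v) :
    ∃ p, G.Adj p v ∧ G.dist u p + 1 = G.dist u v := by
  obtain ⟨q, hq, hql⟩ := hT.isConnected.exists_path_of_dist u v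
  have hd0 : G.dist u v ≠ 0 := fun h0 => huv (hT.isConnected.dist_eq_zero_iff.mp h0)
  cases hqr : q.reverse with
  | nil => exact absurd rfl huv
  | cons h t =>
      rename_i x
      refine ⟨x, h.symm, ?_⟩
      have hlen : 1 + t.length = G.dist u v := by
        have := congrArg SimpleGraph.Walk.length hqr
        rw [SimpleGraph.Walk.length_reverse, hql] at this
        rw [SimpleGraph.Walk.length_cons] at this
        omega
      have h1 : G.dist u x ≤ t.length := by
        simpa using SimpleGraph.dist_le t.reverse
      have h2 : G.dist u v ≤ G.dist u x + 1 := by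
        have h3 : G.dist u v ≤ G.dist u x + G.dist x v := hT.isConnected.dist_triangle
        rw [adj_dist_one hT h.symm] at h3
        exact h3
      omega

/-- uniqueness of the parent. -/
lemma parent_unique (hT : G.IsTree) {u v p p' : V} (hp : G.Adj p v) (hp' : G.Adj p' v)
    (hd : G.dist u p + 1 = G.dist u v) (hd' : G.dist u p' + 1 = G.dist u v) : p = p' := by
  classical
  obtain ⟨P, hP, hPl⟩ := hT.isConnected.exists_path_of_dist u p
  obtain ⟨P', hP', hPl'⟩ := hT.isConnected.exists_path_of_dist u p'
  have hvP : v ∉ P.support := by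
    intro hv
    have := dist_mem_support hT P hP hv
    omega
  have hvP' : v ∉ P'.support := by
    intro hv
    have := dist_mem_support hT P' hP' hv
    omega
  have hvmem : v ∉ P.reverse.support := by
    rwa [SimpleGraph.Walk.support_reverse, List.mem_reverse]
  have hvmem' : v ∉ P'.reverse.support := by
    rwa [SimpleGraph.Walk.support_reverse, List.mem_reverse]
  have hQ : (SimpleGraph.Walk.cons hp.symm P.reverse).IsPath := (hP.reverse).cons hvmem
  have hQ' : (SimpleGraph.Walk.cons hp'.symm P'.reverse).IsPath := (hP'.reverse).cons hvmem'
  have heq : SimpleGraph.Walk.cons hp.symm P.reverse = SimpleGraph.Walk.cons hp'.symm P'.reverse :=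
    (hT.existsUnique_path v u).unique hQ hQ'
  have := congrArg (fun w => w.getVert 1) heq
  simpa using this

lemma mem_support_dist_split (hT : G.IsTree) {u v w : V} (p : G.Walk u v) (hp : p.IsPath)
    (hw : w ∈ p.support) : G.dist u w + G.dist w v = p.length := by
  classical
  have h1 : (p.takeUntil w hw).length = G.dist u w :=
    path_length_eq_dist hT _ (hp.takeUntil hw)
  have h2 : (p.dropUntil w hw).length = G.dist w v :=
    path_length_eq_dist hT _ (hp.dropUntil hw)
  have h3 : (p.takeUntil w hw).length + (p.dropUntil w hw).length = p.length := by
    rw [← SimpleGraph.Walk.length_append, p.take_spec hw]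
  omega

/-- boundary lemma: the only edge between the two sides of an edge is the edge itself. -/
lemma boundary (hT : G.IsTree) {a b v w : V} (hab : G.Adj a b) (hvw : G.Adj v w)
    (h1 : G.dist a v = G.dist b v + 1) (h2 : G.dist b w = G.dist a w + 1) :
    v = b ∧ w = a := by
  classical
  have hmn : G.dist a w = G.dist b v := by
    have t1 : G.dist a v ≤ G.dist a w + G.dist w v := hT.isConnected.dist_triangle
    have t2 : G.dist b w ≤ G.dist b v + G.dist v w := hT.isConnected.dist_triangle
    rw [adj_dist_one hT hvw.symm] at t1
    rw [adj_dist_one hT hvw] at t2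
    omega
  by_cases hvb : v = b
  · subst hvb
    refine ⟨rfl, ?_⟩
    have : G.dist v v = 0 := SimpleGraph.dist_self
    have hw0 : G.dist a w = 0 := by omega
    exact (hT.isConnected.dist_eq_zero_iff.mp hw0).symm
  · exfalso
    obtain ⟨Pb, hPb, hPbl⟩ := hT.isConnected.exists_path_of_dist b v
    obtain ⟨Pw, hPw, hPwl⟩ := hT.isConnected.exists_path_of_dist a w
    have haPb : a ∉ Pb.support := by
      intro ha
      have := mem_support_dist_split hT Pb hPb ha
      rw [adj_dist_one hT hab.symm, hPbl] at this
      omega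
    have hbPw : b ∉ Pw.support := by
      intro hb
      have := mem_support_dist_split hT Pw hPw hb
      rw [adj_dist_one hT hab, hPwl] at this
      have hc : G.dist b w = G.dist b v + 1 := by rw [h2, hmn]
      omega
    by_cases hvPw : v ∈ Pw.support
    · have := mem_support_dist_split hT Pw hPw hvPw
      rw [hPwl, adj_dist_one hT hvw] at this
      have hav : G.dist a v = G.dist b v + 1 := h1
      omega
    · have hvPwr : v ∉ Pw.reverse.support := by
        rwa [SimpleGraph.Walk.support_reverse, List.mem_reverse]
      have hR : (SimpleGraph.Walk.cons hvw Pw.reverse).IsPath := (hPw.reverse).cons hvPwr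
      have haPbr : a ∉ Pb.reverse.support := by
        rwa [SimpleGraph.Walk.support_reverse, List.mem_reverse]
      have hPa : (SimpleGraph.Walk.cons hvw Pw.reverse).reverse.IsPath := hR.reverse
      -- the unique path from a to v : cons hab Pb
      have hPa2 : (SimpleGraph.Walk.cons hab Pb).IsPath := hPb.cons haPb
      have heq : SimpleGraph.Walk.cons hab Pb = (SimpleGraph.Walk.cons hvw Pw.reverse).reverse :=
        (hT.existsUnique_path a v).unique hPa2 hPa
      have hbmem : b ∈ (SimpleGraph.Walk.cons hab Pb).support :=
        by rw [SimpleGraph.Walk.support_cons]; exact List.mem_cons_of_mem _ Pb.start_mem_support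
      rw [heq] at hbmem
      rw [SimpleGraph.Walk.support_reverse, List.mem_reverse,
        SimpleGraph.Walk.support_cons] at hbmem
      rcases List.mem_cons.mp hbmem with h | h
      · exact hvb h.symm
      · rw [SimpleGraph.Walk.support_reverse, List.mem_reverse] at h
        exact hbPw h

/-! ### Sides of an edge -/

/-- The set of vertices strictly closer to `b` than to `a` (for an edge `a-b`,
this is the component of `b` after deleting the edge). -/
def Side (G : SimpleGraph V) (a b : V) : Set V := {v | G.dist b v < G.dist a v}

lemma mem_side_iff (hT : G.IsTree) {a b : V} (hab : G.Adj a b) {v : V} :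
    v ∈ Side G a b ↔ G.dist a v = G.dist b v + 1 := by
  have ca : G.dist v a = G.dist a v := SimpleGraph.dist_comm
  have cb : G.dist v b = G.dist b v := SimpleGraph.dist_comm
  have hdi := adj_dist_dichotomy hT hab v
  simp only [Side, Set.mem_setOf_eq]
  omega

lemma not_mem_side_iff (hT : G.IsTree) {a b : V} (hab : G.Adj a b) {v : V} :
    v ∉ Side G a b ↔ G.dist b v = G.dist a v + 1 := by
  have ca : G.dist v a = G.dist a v := SimpleGraph.dist_comm
  have cb : G.dist v b = G.dist b v := SimpleGraph.dist_comm
  have hdi := adj_dist_dichotomy hT hab v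
  simp only [Side, Set.mem_setOf_eq]
  omega

lemma self_mem_side (hT : G.IsTree) {a b : V} (hab : G.Adj a b) : b ∈ Side G a b := by
  rw [mem_side_iff hT hab]
  simp [adj_dist_one hT hab, SimpleGraph.dist_self]

lemma not_self_mem_side (hT : G.IsTree) {a b : V} (hab : G.Adj a b) : a ∉ Side G a b := by
  rw [not_mem_side_iff hT hab]
  simp [adj_dist_one hT hab.symm, SimpleGraph.dist_self]

/-- The only edge leaving `Side G a b` is the edge `b-a`. -/
lemma side_edge (hT : G.IsTree) {a b v w : V} (hab : G.Adj a b) (hvw : G.Adj v w)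
    (hv : v ∈ Side G a b) (hw : w ∉ Side G a b) : v = b ∧ w = a := by
  rw [mem_side_iff hT hab] at hv
  rw [not_mem_side_iff hT hab] at hw
  exact boundary hT hab hvw hv hw

/-- A vertex on the far side of an edge `(a, b)` as seen from `ℓ` (i.e. with
`dist ℓ a < dist ℓ b`) : `ℓ` is not in `Side G a b`. -/
lemma root_not_mem_side (hT : G.IsTree) {a b ℓ : V} (hab : G.Adj a b)
    (hd : G.dist ℓ a < G.dist ℓ b) : ℓ ∉ Side G a b := by
  rw [not_mem_side_iff hT hab]
  have h1 : G.dist ℓ b = G.dist ℓ a + 1 := adj_dist_succ hT hab ℓ hd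
  have c1 : G.dist b ℓ = G.dist ℓ b := SimpleGraph.dist_comm
  have c2 : G.dist a ℓ = G.dist ℓ a := SimpleGraph.dist_comm
  omega

section Main

variable [Fintype V]

lemma exists_ne_of_ncard_ne_one {A : Set V} (hA : A.ncard ≠ 1) {x : V} (hx : x ∈ A) :
    ∃ y ∈ A, y ≠ x := by
  by_contra h
  push_neg at h
  have hsub : A ⊆ {x} := fun y hy => h y hy
  have h1 : A.ncard ≤ 1 := by
    have := Set.ncard_le_ncard hsub (Set.toFinite _)
    simpa using this
  have h2 : 0 < A.ncard := (Set.ncard_pos (Set.toFinite _)).2 ⟨x, hx⟩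
  omega

lemma cond_i (hT : G.IsTree) {S : Set V} (hmin : IsMinimalFort G S) {ℓ a b : V} (hℓ : ℓ ∈ S)
    (hab : G.Adj a b) (hd : G.dist ℓ a < G.dist ℓ b) (ha : a ∉ S) (hb : b ∉ S) :
    G.neighborSet b ∩ S = ∅ := by
  set C := Side G a b with hC
  have hℓC : ℓ ∉ C := root_not_mem_side hT hab hd
  have key : S ∩ C = ∅ := by
    by_contra hne
    rw [← Ne, ← Set.nonempty_iff_ne_empty] at hne
    have hfort : IsFort G (S ∩ C) := by
      refine ⟨hne, ?_⟩
      intro v hv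
      by_cases hvC : v ∈ C
      · have hvS : v ∉ S := fun hvS => hv ⟨hvS, hvC⟩
        have heq : G.neighborSet v ∩ (S ∩ C) = G.neighborSet v ∩ S := by
          ext z
          simp only [Set.mem_inter_iff, SimpleGraph.mem_neighborSet]
          refine ⟨fun h => ⟨h.1, h.2.1⟩, fun h => ⟨h.1, h.2, ?_⟩⟩
          by_contra hzC
          obtain ⟨hv2, hz2⟩ := side_edge hT hab h.1 hvC hzC
          exact ha (hz2 ▸ h.2)
        rw [heq]
        exact hmin.1.2 v hvS
      · have heq : G.neighborSet v ∩ (S ∩ C) = ∅ := by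
          ext z
          simp only [Set.mem_inter_iff, SimpleGraph.mem_neighborSet,
            Set.mem_empty_iff_false, iff_false, not_and]
          intro h1 h2 h3
          obtain ⟨hz2, hv2⟩ := side_edge hT hab h1.symm h3 hvC
          exact hb (hz2 ▸ h2)
        rw [heq]; simp
    refine hmin.2 (S ∩ C) ?_ hfort
    exact (Set.ssubset_iff_of_subset Set.inter_subset_left).2 ⟨ℓ, hℓ, fun h => hℓC h.2⟩
  ext x
  simp only [Set.mem_inter_iff, SimpleGraph.mem_neighborSet, Set.mem_empty_iff_false,
    iff_false, not_and]
  intro h1 h2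
  have hxC : x ∈ C := by
    by_contra hxC
    obtain ⟨_, hx2⟩ := side_edge hT hab h1 (self_mem_side hT hab) hxC
    exact ha (hx2 ▸ h2)
  have : x ∈ S ∩ C := ⟨h2, hxC⟩
  rw [key] at this
  exact this

lemma child_dist (hT : G.IsTree) {ℓ a b x : V} (hab : G.Adj a b)
    (hd : G.dist ℓ a < G.dist ℓ b) (hbx : G.Adj b x) (hxa : x ≠ a) :
    G.dist ℓ x = G.dist ℓ b + 1 := by
  have hda : G.dist ℓ b = G.dist ℓ a + 1 := adj_dist_succ hT hab ℓ hd
  rcases adj_dist_dichotomy hT hbx ℓ with h | h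
  · exact absurd (parent_unique hT (u := ℓ) hbx.symm hab (by omega) (by omega)) hxa
  · exact h

lemma cond_iii (hT : G.IsTree) {S : Set V} (hmin : IsMinimalFort G S) {ℓ a b : V} (hℓ : ℓ ∈ S)
    (hab : G.Adj a b) (hd : G.dist ℓ a < G.dist ℓ b) (ha : a ∈ S) (hb : b ∉ S) :
    ((G.neighborSet b ∩ S) \ {a}).ncard = 1 := by
  have haN : a ∈ G.neighborSet b ∩ S := ⟨hab.symm, ha⟩
  obtain ⟨x, hxN, hxa⟩ := exists_ne_of_ncard_ne_one (hmin.1.2 b hb) haN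
  have hxmem : x ∈ (G.neighborSet b ∩ S) \ {a} := ⟨hxN, by simpa using hxa⟩
  have hsub : (G.neighborSet b ∩ S) \ {a} = {x} := by
    apply Set.Subset.antisymm _ (by simpa using hxmem)
    rintro y ⟨⟨hy1, hy2⟩, hy3⟩
    simp only [Set.mem_singleton_iff]
    by_contra hyx
    -- y is a second child of b distinct from x; remove its side
    rw [Set.mem_singleton_iff] at hy3
    replace hy1 : G.Adj b y := hy1
    have hdy : G.dist ℓ y = G.dist ℓ b + 1 := child_dist hT hab hd hy1 hy3
    set Cy := Side G b y with hCy
    have hyCy : y ∈ Cy := self_mem_side hT hy1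
    have hbCy : b ∉ Cy := not_self_mem_side hT hy1
    have hℓCy : ℓ ∉ Cy := root_not_mem_side hT hy1 (by omega)
    have haCy : a ∉ Cy := by
      intro h
      obtain ⟨h1, _⟩ := side_edge hT hy1 hab h hbCy
      exact hy3 h1.symm
    have hxCy : x ∉ Cy := by
      intro h
      obtain ⟨h1, _⟩ := side_edge hT hy1 (hxN.1 : G.Adj b x).symm h hbCy
      exact hyx h1.symm
    have hfortF : IsFort G (S \ Cy) := by
      refine ⟨⟨ℓ, hℓ, hℓCy⟩, ?_⟩
      intro v hv
      by_cases hvC : v ∈ Cy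
      · have heq : G.neighborSet v ∩ (S \ Cy) = ∅ := by
          ext z
          simp only [Set.mem_inter_iff, SimpleGraph.mem_neighborSet, Set.mem_diff,
            Set.mem_empty_iff_false, iff_false, not_and]
          intro h1 h2 h3
          obtain ⟨_, hz2⟩ := side_edge hT hy1 h1 hvC h3
          exact hb (hz2 ▸ h2)
        rw [heq]; simp
      · have hvS : v ∉ S := fun h => hv ⟨h, hvC⟩
        by_cases hvb : v = b
        · subst hvb
          have haF : a ∈ G.neighborSet v ∩ (S \ Cy) := ⟨hab.symm, ha, haCy⟩
          have hxF : x ∈ G.neighborSet v ∩ (S \ Cy) := ⟨hxN.1, hxN.2, hxCy⟩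
          intro hc1
          have : 1 < (G.neighborSet v ∩ (S \ Cy)).ncard :=
            (Set.one_lt_ncard (Set.toFinite _)).2 ⟨a, haF, x, hxF, fun e => hxa e.symm⟩
          omega
        · have heq : G.neighborSet v ∩ (S \ Cy) = G.neighborSet v ∩ S := by
            ext z
            simp only [Set.mem_inter_iff, SimpleGraph.mem_neighborSet, Set.mem_diff]
            refine ⟨fun h => ⟨h.1, h.2.1⟩, fun h => ⟨h.1, h.2, ?_⟩⟩
            intro hzC
            obtain ⟨hz1, hz2⟩ := side_edge hT hy1 h.1.symm hzC hvC
            exact hvb hz2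
          rw [heq]
          exact hmin.1.2 v hvS
    refine hmin.2 (S \ Cy) ?_ hfortF
    exact (Set.ssubset_iff_of_subset Set.diff_subset).2 ⟨y, hy2, fun h => h.2 hyCy⟩
  rw [hsub]
  simp

lemma side_disjoint (hT : G.IsTree) {b x y : V} (hbx : G.Adj b x) (hby : G.Adj b y)
    (hxy : x ≠ y) {v : V} (h1 : v ∈ Side G b x) (h2 : v ∈ Side G b y) : False := by
  rw [mem_side_iff hT hbx] at h1
  rw [mem_side_iff hT hby] at h2
  have c1 : G.dist v x = G.dist x v := SimpleGraph.dist_comm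
  have c2 : G.dist v y = G.dist y v := SimpleGraph.dist_comm
  have c3 : G.dist v b = G.dist b v := SimpleGraph.dist_comm
  exact hxy (parent_unique hT (u := v) hbx.symm hby.symm (by omega) (by omega))

lemma cond_ii (hT : G.IsTree) {S : Set V} (hmin : IsMinimalFort G S) {ℓ a b : V} (hℓ : ℓ ∈ S)
    (hab : G.Adj a b) (hd : G.dist ℓ a < G.dist ℓ b) (ha : a ∉ S) (hb : b ∈ S) :
    (G.neighborSet b ∩ S).ncard ≤ 1 := by
  by_contra hc
  push_neg at hc
  obtain ⟨x, hx, y, hy, hxy⟩ := (Set.one_lt_ncard (Set.toFinite _)).1 hc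
  have hbx : G.Adj b x := hx.1
  have hby : G.Adj b y := hy.1
  have hxa : x ≠ a := fun e => ha (e ▸ hx.2)
  have hya : y ≠ a := fun e => ha (e ▸ hy.2)
  have hdx : G.dist ℓ x = G.dist ℓ b + 1 := child_dist hT hab hd hbx hxa
  have hdy : G.dist ℓ y = G.dist ℓ b + 1 := child_dist hT hab hd hby hya
  set Cx := Side G b x with hCx
  set Cy := Side G b y with hCy
  have hxCx : x ∈ Cx := self_mem_side hT hbx
  have hyCy : y ∈ Cy := self_mem_side hT hby
  have hbCx : b ∉ Cx := not_self_mem_side hT hbx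
  have hbCy : b ∉ Cy := not_self_mem_side hT hby
  set F := S ∩ (Cx ∪ Cy) with hF
  have hbF : b ∉ F := fun h => h.2.elim hbCx hbCy
  have hfortF : IsFort G F := by
    refine ⟨⟨x, hx.2, Or.inl hxCx⟩, ?_⟩
    intro v hv
    by_cases hvx : v ∈ Cx
    · have hvS : v ∉ S := fun h => hv ⟨h, Or.inl hvx⟩
      have hvnx : v ≠ x := fun e => hvS (e ▸ hx.2)
      have heq : G.neighborSet v ∩ F = G.neighborSet v ∩ S := by
        ext z
        simp only [hF, Set.mem_inter_iff, SimpleGraph.mem_neighborSet]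
        refine ⟨fun h => ⟨h.1, h.2.1⟩, fun h => ⟨h.1, h.2, Or.inl ?_⟩⟩
        by_contra hzC
        obtain ⟨hv2, _⟩ := side_edge hT hbx h.1 hvx hzC
        exact hvnx hv2
      rw [heq]
      exact hmin.1.2 v hvS
    · by_cases hvy : v ∈ Cy
      · have hvS : v ∉ S := fun h => hv ⟨h, Or.inr hvy⟩
        have hvny : v ≠ y := fun e => hvS (e ▸ hy.2)
        have heq : G.neighborSet v ∩ F = G.neighborSet v ∩ S := by
          ext z
          simp only [hF, Set.mem_inter_iff, SimpleGraph.mem_neighborSet]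
          refine ⟨fun h => ⟨h.1, h.2.1⟩, fun h => ⟨h.1, h.2, Or.inr ?_⟩⟩
          by_contra hzC
          obtain ⟨hv2, _⟩ := side_edge hT hby h.1 hvy hzC
          exact hvny hv2
        rw [heq]
        exact hmin.1.2 v hvS
      · by_cases hvb : v = b
        · subst hvb
          have heq : G.neighborSet v ∩ F = {x, y} := by
            ext z
            simp only [hF, Set.mem_inter_iff, SimpleGraph.mem_neighborSet,
              Set.mem_insert_iff, Set.mem_singleton_iff]
            constructor
            · rintro ⟨h1, _, h3 | h3⟩
              · exact Or.inl (side_edge hT hbx h1.symm h3 hvx).1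
              · exact Or.inr (side_edge hT hby h1.symm h3 hvy).1
            · rintro (rfl | rfl)
              · exact ⟨hbx, hx.2, Or.inl hxCx⟩
              · exact ⟨hby, hy.2, Or.inr hyCy⟩
          rw [heq, Set.ncard_pair hxy]
          omega
        · have heq : G.neighborSet v ∩ F = ∅ := by
            ext z
            simp only [hF, Set.mem_inter_iff, SimpleGraph.mem_neighborSet,
              Set.mem_empty_iff_false, iff_false, not_and]
            rintro h1 h2 (h3 | h3)
            · exact hvb (side_edge hT hbx h1.symm h3 hvx).2
            · exact hvb (side_edge hT hby h1.symm h3 hvy).2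
          rw [heq]; simp
  refine hmin.2 F ?_ hfortF
  exact (Set.ssubset_iff_of_subset Set.inter_subset_left).2 ⟨b, hb, hbF⟩

lemma cond_iv (hT : G.IsTree) {S : Set V} (hmin : IsMinimalFort G S) {ℓ a b : V} (hℓ : ℓ ∈ S)
    (hab : G.Adj a b) (hd : G.dist ℓ a < G.dist ℓ b) (ha : a ∈ S) (hb : b ∈ S) :
    ((G.neighborSet b ∩ S) \ {a}).ncard = 0 := by
  rw [Set.ncard_eq_zero (Set.toFinite _)]
  by_contra hne
  rw [← Ne, ← Set.nonempty_iff_ne_empty] at hne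
  obtain ⟨x, ⟨hx, hxa'⟩⟩ := hne
  rw [Set.mem_singleton_iff] at hxa'
  have hbx : G.Adj b x := hx.1
  have hdx : G.dist ℓ x = G.dist ℓ b + 1 := child_dist hT hab hd hbx hxa'
  set Ca := Side G b a with hCa
  set Cx := Side G b x with hCx
  have haCa : a ∈ Ca := self_mem_side hT hab.symm
  have hbCa : b ∉ Ca := not_self_mem_side hT hab.symm
  have hxCx : x ∈ Cx := self_mem_side hT hbx
  have hbCx : b ∉ Cx := not_self_mem_side hT hbx
  set F := S ∩ (Ca ∪ Cx) with hF
  have hbF : b ∉ F := fun h => h.2.elim hbCa hbCx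
  have hfortF : IsFort G F := by
    refine ⟨⟨x, hx.2, Or.inr hxCx⟩, ?_⟩
    intro v hv
    by_cases hvb : v = b
    · subst hvb
      have heq : G.neighborSet v ∩ F = {a, x} := by
        ext z
        simp only [hF, Set.mem_inter_iff, SimpleGraph.mem_neighborSet,
          Set.mem_insert_iff, Set.mem_singleton_iff]
        constructor
        · rintro ⟨h1, _, h3 | h3⟩
          · exact Or.inl (side_edge hT hab.symm h1.symm h3 hbCa).1
          · exact Or.inr (side_edge hT hbx h1.symm h3 hbCx).1
        · rintro (rfl | rfl)
          · exact ⟨hab.symm, ha, Or.inl haCa⟩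
          · exact ⟨hbx, hx.2, Or.inr hxCx⟩
      rw [heq, Set.ncard_pair (fun e => hxa' e.symm)]
      omega
    · by_cases hvCa : v ∈ Ca
      · have hvS : v ∉ S := fun h => hv ⟨h, Or.inl hvCa⟩
        have hvna : v ≠ a := fun e => hvS (e ▸ ha)
        have heq : G.neighborSet v ∩ F = G.neighborSet v ∩ S := by
          ext z
          simp only [hF, Set.mem_inter_iff, SimpleGraph.mem_neighborSet]
          refine ⟨fun h => ⟨h.1, h.2.1⟩, fun h => ⟨h.1, h.2, Or.inl ?_⟩⟩
          by_contra hzC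
          obtain ⟨hv2, _⟩ := side_edge hT hab.symm h.1 hvCa hzC
          exact hvna hv2
        rw [heq]
        exact hmin.1.2 v hvS
      · by_cases hvCx : v ∈ Cx
        · have hvS : v ∉ S := fun h => hv ⟨h, Or.inr hvCx⟩
          have hvnx : v ≠ x := fun e => hvS (e ▸ hx.2)
          have heq : G.neighborSet v ∩ F = G.neighborSet v ∩ S := by
            ext z
            simp only [hF, Set.mem_inter_iff, SimpleGraph.mem_neighborSet]
            refine ⟨fun h => ⟨h.1, h.2.1⟩, fun h => ⟨h.1, h.2, Or.inr ?_⟩⟩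
            by_contra hzC
            obtain ⟨hv2, _⟩ := side_edge hT hbx h.1 hvCx hzC
            exact hvnx hv2
          rw [heq]
          exact hmin.1.2 v hvS
        · have heq : G.neighborSet v ∩ F = ∅ := by
            ext z
            simp only [hF, Set.mem_inter_iff, SimpleGraph.mem_neighborSet,
              Set.mem_empty_iff_false, iff_false, not_and]
            rintro h1 h2 (h3 | h3)
            · exact hvb (side_edge hT hab.symm h1.symm h3 hvCa).2
            · exact hvb (side_edge hT hbx h1.symm h3 hvCx).2
          rw [heq]; simp
  refine hmin.2 F ?_ hfortF
  exact (Set.ssubset_iff_of_subset Set.inter_subset_left).2 ⟨b, hb, hbF⟩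

lemma exists_leaf (hT : G.IsTree) (hcard : 2 ≤ Fintype.card V) {S : Set V}
    (hfort : IsFort G S) : ∃ ℓ ∈ S, IsLeaf G ℓ := by
  classical
  obtain ⟨r⟩ := hT.isConnected.nonempty
  obtain ⟨s, hsS, hmax⟩ := Set.exists_max_image S (G.dist r) (Set.toFinite S) hfort.1
  by_cases hs0 : G.dist r s = 0
  · exfalso
    have hsr : r = s := hT.isConnected.dist_eq_zero_iff.mp hs0
    have hS : S = {r} := by
      apply Set.Subset.antisymm
      · intro t ht
        have h1 := hmax t ht
        rw [← hsr] at hmax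
        have h2 : G.dist r t = 0 := by
          have := hmax t ht
          rw [SimpleGraph.dist_self] at this
          omega
        exact (hT.isConnected.dist_eq_zero_iff.mp h2).symm
      · intro t ht
        rw [Set.mem_singleton_iff] at ht
        subst ht
        rwa [hsr]
    obtain ⟨v, hv⟩ : ∃ v : V, v ≠ r := Fintype.exists_ne_of_one_lt_card (by omega) r
    obtain ⟨w, hwr, _⟩ := exists_parent hT hv
    have hwS : w ∉ S := by
      rw [hS, Set.mem_singleton_iff]
      intro e
      exact G.loopless.irrefl r (e ▸ hwr)
    have hNw : G.neighborSet w ∩ S = {r} := by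
      ext z
      simp only [Set.mem_inter_iff, SimpleGraph.mem_neighborSet, Set.mem_singleton_iff]
      constructor
      · rintro ⟨_, h2⟩
        rwa [hS, Set.mem_singleton_iff] at h2
      · rintro rfl
        exact ⟨hwr, by rw [hS]; rfl⟩
    exact hfort.2 w hwS (by rw [hNw]; simp)
  · have hsr : s ≠ r := fun e => hs0 (e ▸ SimpleGraph.dist_self)
    obtain ⟨p, hps, hpd⟩ := exists_parent hT (Ne.symm hsr)
    refine ⟨s, hsS, ?_⟩
    have hNs : G.neighborSet s = {p} := by
      ext c
      simp only [SimpleGraph.mem_neighborSet, Set.mem_singleton_iff]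
      constructor
      · intro hc
        rcases adj_dist_dichotomy hT hc r with h | h
        · exact parent_unique hT (u := r) hc.symm hps (by omega) hpd
        · exfalso
          have hcS : c ∉ S := by
            intro hcS
            have := hmax c hcS
            omega
          have hNc : G.neighborSet c ∩ S = {s} := by
            ext z
            simp only [Set.mem_inter_iff, SimpleGraph.mem_neighborSet, Set.mem_singleton_iff]
            constructor
            · rintro ⟨h1, h2⟩
              have hz1 : G.dist r z ≤ G.dist r s := hmax z h2
              have hz2 : G.dist r c ≤ G.dist r z + 1 := by
                have ht := hT.isConnected.dist_triangle (u := r) (v := z) (w := c)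
                rw [adj_dist_one hT h1.symm] at ht
                exact ht
              exact parent_unique hT (u := r) h1.symm hc (by omega) (by omega)
            · rintro rfl
              exact ⟨hc.symm, hsS⟩
          exact hfort.2 c hcS (by rw [hNc]; simp)
      · rintro rfl
        exact hps.symm
    show (G.neighborSet s).ncard = 1
    rw [hNs]
    simp

lemma backward (hT : G.IsTree) {S : Set V} {ℓ : V} (hℓS : ℓ ∈ S) (hℓleaf : IsLeaf G ℓ)
    (cond : ∀ a b : V, G.Adj a b → G.dist ℓ a < G.dist ℓ b →
      ((a ∉ S → b ∉ S → G.neighborSet b ∩ S = ∅) ∧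
       (a ∉ S → b ∈ S → (G.neighborSet b ∩ S).ncard ≤ 1) ∧
       (a ∈ S → b ∉ S → ((G.neighborSet b ∩ S) \ {a}).ncard = 1) ∧
       (a ∈ S → b ∈ S → ((G.neighborSet b ∩ S) \ {a}).ncard = 0))) :
    IsMinimalFort G S := by
  constructor
  · refine ⟨⟨ℓ, hℓS⟩, ?_⟩
    intro v hv hc1
    have hvℓ : v ≠ ℓ := fun e => hv (e ▸ hℓS)
    obtain ⟨p, hpv, hpd⟩ := exists_parent hT (fun e => hvℓ e.symm)
    have hdlt : G.dist ℓ p < G.dist ℓ v := by omega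
    by_cases hpS : p ∈ S
    · have h3 := (cond p v hpv hdlt).2.2.1 hpS hv
      have hpN : p ∈ G.neighborSet v ∩ S := ⟨hpv.symm, hpS⟩
      have h4 := Set.ncard_diff_singleton_add_one hpN (Set.toFinite _)
      omega
    · have h3 := (cond p v hpv hdlt).1 hpS hv
      rw [h3] at hc1
      simp at hc1
  · rintro F hss ⟨hFne, hFfort⟩
    have hFS : F ⊆ S := hss.subset
    have claim1 : ∀ n : ℕ, ∀ s ∈ F, G.dist ℓ s = n → ℓ ∈ F := by
      intro n
      induction n using Nat.strong_induction_on with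
      | _ n IH =>
        intro s hsF hdn
        by_cases hsℓ : s = ℓ
        · exact hsℓ ▸ hsF
        · have hsS : s ∈ S := hFS hsF
          have hn1 : 1 ≤ n := by
            rcases Nat.eq_zero_or_pos n with h0 | h0
            · exact absurd (hT.isConnected.dist_eq_zero_iff.mp (by omega)).symm hsℓ
            · exact h0
          obtain ⟨p, hpv, hpd⟩ := exists_parent hT (fun e => hsℓ e.symm)
          have hdlt : G.dist ℓ p < G.dist ℓ s := by omega
          by_cases hpF : p ∈ F
          · exact IH (G.dist ℓ p) (by omega) p hpF rfl
          · by_cases hpS : p ∈ S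
            · by_cases hpℓ : p = ℓ
              · exfalso
                have hl : (G.neighborSet p).ncard = 1 := by rw [hpℓ]; exact hℓleaf
                have hle : (G.neighborSet p ∩ F).ncard ≤ 1 := by
                  have := Set.ncard_le_ncard
                    (Set.inter_subset_left (s := G.neighborSet p) (t := F)) (Set.toFinite _)
                  omega
                have hge : 0 < (G.neighborSet p ∩ F).ncard :=
                  (Set.ncard_pos (Set.toFinite _)).2 ⟨s, hpv, hsF⟩
                exact hFfort p hpF (by omega)
              · obtain ⟨q, hqp, hqd⟩ := exists_parent hT (fun e => hpℓ e.symm)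
                have hdq : G.dist ℓ q < G.dist ℓ p := by omega
                have hsq : s ≠ q := by
                  intro e
                  rw [← e] at hqd
                  omega
                by_cases hqS : q ∈ S
                · exfalso
                  have h4 := (cond q p hqp hdq).2.2.2 hqS hpS
                  rw [Set.ncard_eq_zero (Set.toFinite _)] at h4
                  have hsmem : s ∈ (G.neighborSet p ∩ S) \ {q} :=
                    ⟨⟨hpv, hsS⟩, by simpa using hsq⟩
                  rw [h4] at hsmem
                  exact absurd hsmem (Set.notMem_empty s)
                · exfalso
                  have h4 := (cond q p hqp hdq).2.1 hqS hpS
                  have hsmem : s ∈ G.neighborSet p ∩ F := ⟨hpv, hsF⟩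
                  have hsub : G.neighborSet p ∩ F ⊆ {s} := by
                    intro z hz
                    rw [Set.mem_singleton_iff]
                    by_contra hzs
                    have : 1 < (G.neighborSet p ∩ S).ncard :=
                      (Set.one_lt_ncard (Set.toFinite _)).2
                        ⟨z, ⟨hz.1, hFS hz.2⟩, s, ⟨hpv, hsS⟩, hzs⟩
                    omega
                  have heq : G.neighborSet p ∩ F = {s} :=
                    Set.Subset.antisymm hsub (Set.singleton_subset_iff.2 hsmem)
                  exact hFfort p hpF (by rw [heq]; simp)
            · have hpℓ : p ≠ ℓ := fun e => hpS (e ▸ hℓS)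
              obtain ⟨q, hqp, hqd⟩ := exists_parent hT (fun e => hpℓ e.symm)
              have hdq : G.dist ℓ q < G.dist ℓ p := by omega
              have hsq : s ≠ q := by intro e; rw [← e] at hqd; omega
              by_cases hqS : q ∈ S
              · have h4 := (cond q p hqp hdq).2.2.1 hqS hpS
                have hpF' : p ∉ F := fun h => hpS (hFS h)
                have hsmem : s ∈ G.neighborSet p ∩ F := ⟨hpv, hsF⟩
                obtain ⟨z, hzN, hzs⟩ := exists_ne_of_ncard_ne_one (hFfort p hpF') hsmem
                have hzq : z = q := by
                  by_contra hzq
                  have : 1 < ((G.neighborSet p ∩ S) \ {q}).ncard :=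
                    (Set.one_lt_ncard (Set.toFinite _)).2
                      ⟨z, ⟨⟨hzN.1, hFS hzN.2⟩, by simpa using hzq⟩,
                       s, ⟨⟨hpv, hsS⟩, by simpa using hsq⟩, hzs⟩
                  omega
                exact IH (G.dist ℓ q) (by omega) q (hzq ▸ hzN.2) rfl
              · have h4 := (cond q p hqp hdq).1 hqS hpS
                exfalso
                have hsm : s ∈ G.neighborSet p ∩ S := ⟨hpv, hsS⟩
                rw [h4] at hsm
                exact absurd hsm (Set.notMem_empty s)
    have hℓF : ℓ ∈ F := by
      obtain ⟨s0, hs0⟩ := hFne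
      exact claim1 (G.dist ℓ s0) s0 hs0 rfl
    have claim2 : ∀ n : ℕ, ∀ s ∈ S, G.dist ℓ s = n → s ∈ F := by
      intro n
      induction n using Nat.strong_induction_on with
      | _ n IH =>
        intro s hsS hdn
        by_contra hsF
        have hsℓ : s ≠ ℓ := fun e => hsF (e ▸ hℓF)
        have hn1 : 1 ≤ n := by
          rcases Nat.eq_zero_or_pos n with h0 | h0
          · exact absurd (hT.isConnected.dist_eq_zero_iff.mp (by omega)).symm hsℓ
          · exact h0
        obtain ⟨p, hpv, hpd⟩ := exists_parent hT (fun e => hsℓ e.symm)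
        have hdlt : G.dist ℓ p < G.dist ℓ s := by omega
        by_cases hpS : p ∈ S
        · have hpF : p ∈ F := IH (G.dist ℓ p) (by omega) p hpS rfl
          have h4 := (cond p s hpv hdlt).2.2.2 hpS hsS
          rw [Set.ncard_eq_zero (Set.toFinite _)] at h4
          have hsub : G.neighborSet s ∩ F ⊆ {p} := by
            intro z hz
            rw [Set.mem_singleton_iff]
            by_contra hzp
            have hzm : z ∈ (G.neighborSet s ∩ S) \ {p} := ⟨⟨hz.1, hFS hz.2⟩, by simpa using hzp⟩
            rw [h4] at hzm
            exact absurd hzm (Set.notMem_empty z)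
          have heq : G.neighborSet s ∩ F = {p} :=
            Set.Subset.antisymm hsub (Set.singleton_subset_iff.2 ⟨hpv.symm, hpF⟩)
          exact hFfort s hsF (by rw [heq]; simp)
        · have hpℓ : p ≠ ℓ := fun e => hpS (e ▸ hℓS)
          obtain ⟨q, hqp, hqd⟩ := exists_parent hT (fun e => hpℓ e.symm)
          have hdq : G.dist ℓ q < G.dist ℓ p := by omega
          have hsq : s ≠ q := by intro e; rw [← e] at hqd; omega
          by_cases hqS : q ∈ S
          · have h4 := (cond q p hqp hdq).2.2.1 hqS hpS
            have hqF : q ∈ F := IH (G.dist ℓ q) (by omega) q hqS rfl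
            have hpF : p ∉ F := fun h => hpS (hFS h)
            have hsub : G.neighborSet p ∩ F ⊆ {q} := by
              intro z hz
              rw [Set.mem_singleton_iff]
              by_contra hzq
              have hzs : z ≠ s := fun e => hsF (e ▸ hz.2)
              have : 1 < ((G.neighborSet p ∩ S) \ {q}).ncard :=
                (Set.one_lt_ncard (Set.toFinite _)).2
                  ⟨z, ⟨⟨hz.1, hFS hz.2⟩, by simpa using hzq⟩,
                   s, ⟨⟨hpv, hsS⟩, by simpa using hsq⟩, hzs⟩
              omega
            have heq : G.neighborSet p ∩ F = {q} :=
              Set.Subset.antisymm hsub (Set.singleton_subset_iff.2 ⟨hqp.symm, hqF⟩)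
            exact hFfort p hpF (by rw [heq]; simp)
          · have h4 := (cond q p hqp hdq).1 hqS hpS
            have hsm : s ∈ G.neighborSet p ∩ S := ⟨hpv, hsS⟩
            rw [h4] at hsm
            exact absurd hsm (Set.notMem_empty s)
    exact hss.ne (Set.Subset.antisymm hFS (fun s hs => claim2 (G.dist ℓ s) s hs rfl))

end Main


end StmtAux

theorem stmt_11 {V : Type*} [Fintype V] (G : SimpleGraph V) (hT : G.IsTree)
    (hcard : 3 ≤ Fintype.card V) (S : Set V) :
    IsMinimalFort G S ↔
      ((∃ ℓ ∈ S, IsLeaf G ℓ) ∧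
       (∀ ℓ ∈ S, IsLeaf G ℓ →
         ∀ a b : V, G.Adj a b → G.dist ℓ a < G.dist ℓ b →
           ((a ∉ S → b ∉ S → G.neighborSet b ∩ S = ∅) ∧
            (a ∉ S → b ∈ S → (G.neighborSet b ∩ S).ncard ≤ 1) ∧
            (a ∈ S → b ∉ S → ((G.neighborSet b ∩ S) \ {a}).ncard = 1) ∧
            (a ∈ S → b ∈ S → ((G.neighborSet b ∩ S) \ {a}).ncard = 0)))) := by
  constructor
  · intro hmin
    refine ⟨StmtAux.exists_leaf hT (by omega) hmin.1, ?_⟩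
    intro ℓ hℓS hℓleaf a b hab hd
    exact ⟨fun ha hb => StmtAux.cond_i hT hmin hℓS hab hd ha hb,
      fun ha hb => StmtAux.cond_ii hT hmin hℓS hab hd ha hb,
      fun ha hb => StmtAux.cond_iii hT hmin hℓS hab hd ha hb,
      fun ha hb => StmtAux.cond_iv hT hmin hℓS hab hd ha hb⟩
  · rintro ⟨⟨ℓ, hℓS, hℓleaf⟩, hcond⟩
    exact StmtAux.backward hT hℓS hℓleaf (hcond ℓ hℓS hℓleaf)
end

section
/- Let G be a finite simple graph and let v, w, x be vertices of G such that v is adjacent only to w, and w is adjacent only to v and x (with v, w, x pairwise distinct). If F is a minimal fort of G with v ∈ F and w ∈ F, then F \ {v, w, x} is a minimal fort of the induced subgraph G − {v, w, x}. -/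
lemma induce_nbr_ncard {V : Type*} (G : SimpleGraph V) (s : Set V) (T : Set s) (a : s) :
    ((G.induce s).neighborSet a ∩ T).ncard = (G.neighborSet a.val ∩ (Subtype.val '' T)).ncard := by
  rw [← Set.ncard_image_of_injective _ Subtype.val_injective]
  congr 1
  ext u
  constructor
  · rintro ⟨b, ⟨hb1, hb2⟩, rfl⟩
    exact ⟨hb1, b, hb2, rfl⟩
  · rintro ⟨h1, b, hb, rfl⟩
    exact ⟨b, ⟨h1, hb⟩, rfl⟩

theorem stmt_12 {V : Type*} [Fintype V] (G : SimpleGraph V) (v w x : V)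
    (hvw : v ≠ w) (hvx : v ≠ x) (hwx : w ≠ x)
    (hv : G.neighborSet v = {w}) (hw : G.neighborSet w = {v, x})
    (F : Set V) (hF : IsMinimalFort G F) (hvF : v ∈ F) (hwF : w ∈ F) :
    IsMinimalFort (G.induce ({v, w, x}ᶜ : Set V))
      (Subtype.val ⁻¹' F : Set ({v, w, x}ᶜ : Set V)) := by
  have adjv : ∀ u, G.Adj v u ↔ u = w := by
    intro u
    rw [← SimpleGraph.mem_neighborSet, hv, Set.mem_singleton_iff]
  have adjw : ∀ u, G.Adj w u ↔ u = v ∨ u = x := by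
    intro u
    rw [← SimpleGraph.mem_neighborSet, hw, Set.mem_insert_iff, Set.mem_singleton_iff]
  -- adjacency consequences
  have nadj_v : ∀ u, u ≠ w → ¬ G.Adj u v := by
    intro u hu h
    exact hu (((adjv u).1 h.symm))
  have nadj_w : ∀ u, u ≠ v → u ≠ x → ¬ G.Adj u w := by
    intro u h1 h2 h
    rcases (adjw u).1 h.symm with h | h
    · exact h1 h
    · exact h2 h
  have adjxw : G.Adj x w := ((adjw x).2 (Or.inr rfl)).symm
  -- Step 1 : x ∉ F
  have hxF : x ∉ F := by
    intro hx
    refine hF.2 (F \ {w}) (Set.sdiff_singleton_ssubset.2 hwF) ⟨⟨v, hvF, by simpa using hvw⟩, ?_⟩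
    intro u hu
    by_cases huw : u = w
    · rw [huw]
      have : G.neighborSet w ∩ (F \ {w}) = {v, x} := by
        rw [hw]
        ext b
        simp only [Set.mem_inter_iff, Set.mem_insert_iff, Set.mem_singleton_iff, Set.mem_diff]
        constructor
        · rintro ⟨h, _⟩; exact h
        · rintro (rfl | rfl)
          · exact ⟨Or.inl rfl, hvF, hvw⟩
          · exact ⟨Or.inr rfl, hx, fun h => hwx h.symm⟩
      rw [this, Set.ncard_pair hvx]
      norm_num
    · have huF : u ∉ F := fun h => hu ⟨h, huw⟩
      have : G.neighborSet u ∩ (F \ {w}) = G.neighborSet u ∩ F := by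
        ext b
        simp only [Set.mem_inter_iff, Set.mem_diff, SimpleGraph.mem_neighborSet,
          Set.mem_singleton_iff]
        constructor
        · rintro ⟨h1, h2, _⟩; exact ⟨h1, h2⟩
        · rintro ⟨h1, h2⟩
          refine ⟨h1, h2, ?_⟩
          rintro rfl
          exact nadj_w u (fun h => huF (h ▸ hvF)) (fun h => huF (h ▸ hx)) h1
      rw [this]
      exact hF.1.2 u huF
  -- Step 2 : F has an element outside {v,w,x}
  have hne : ∃ u, u ∈ F ∧ u ∉ ({v, w, x} : Set V) := by
    by_contra h
    push_neg at h
    apply hF.1.2 x hxF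
    have : G.neighborSet x ∩ F = {w} := by
      ext b
      simp only [Set.mem_inter_iff, SimpleGraph.mem_neighborSet, Set.mem_singleton_iff]
      constructor
      · rintro ⟨hadj, hbF⟩
        have := h b hbF
        simp only [Set.mem_insert_iff, Set.mem_singleton_iff] at this
        rcases this with rfl | rfl | rfl
        · exact absurd hadj.symm (by rw [adjv]; exact fun h => hwx h.symm)
        · rfl
        · exact absurd hadj (G.irrefl)
      · rintro rfl
        exact ⟨adjxw, hwF⟩
    rw [this, Set.ncard_singleton]
  -- key : neighbors outside {v,w,x} of a vertex outside {v,w,x}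
  have key : ∀ u, u ∉ ({v, w, x} : Set V) → ∀ b, G.Adj u b → b ≠ x → b ∉ ({v, w, x} : Set V) := by
    intro u hu b hadj hbx
    simp only [Set.mem_insert_iff, Set.mem_singleton_iff] at hu ⊢
    push_neg at hu
    rintro (rfl | rfl | rfl)
    · exact nadj_v u hu.2.1 hadj
    · exact nadj_w u hu.1 hu.2.2 hadj
    · exact hbx rfl
  constructor
  · -- the preimage is a fort
    obtain ⟨u, huF, hu⟩ := hne
    refine ⟨⟨⟨u, hu⟩, huF⟩, ?_⟩
    intro a ha
    rw [induce_nbr_ncard, Set.image_preimage_eq_inter_range, Subtype.range_coe]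
    have : G.neighborSet a.val ∩ (F ∩ ({v, w, x} : Set V)ᶜ) =
        G.neighborSet a.val ∩ F := by
      ext b
      simp only [Set.mem_inter_iff, SimpleGraph.mem_neighborSet, Set.mem_compl_iff]
      constructor
      · rintro ⟨h1, h2, _⟩; exact ⟨h1, h2⟩
      · rintro ⟨h1, h2⟩
        exact ⟨h1, h2, key a.val a.2 b h1 (fun h => hxF (h ▸ h2))⟩
    rw [this]
    exact hF.1.2 a.val ha
  · -- minimality
    intro F'' hsub hfort
    set T : Set V := Subtype.val '' F'' with hT
    have hTF : T ⊆ F := by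
      rintro b ⟨c, hc, rfl⟩
      exact hsub.1 hc
    have hTout : ∀ b ∈ T, b ∉ ({v, w, x} : Set V) := by
      rintro b ⟨c, _, rfl⟩
      exact c.2
    have hvT : v ∉ T := fun h => hTout v h (by simp)
    have hwT : w ∉ T := fun h => hTout w h (by simp)
    have hxT : x ∉ T := fun h => hTout x h (by simp)
    obtain ⟨c, hcF, hcF''⟩ := Set.exists_of_ssubset hsub
    have hcT : c.val ∉ T := fun ⟨d, hd, he⟩ => hcF'' (Subtype.val_injective he ▸ hd)
    -- the induced-fort condition for vertices outside {v,w,x}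
    have hH : ∀ u, (hu : u ∉ ({v, w, x} : Set V)) → u ∉ T →
        (G.neighborSet u ∩ T).ncard ≠ 1 := by
      intro u hu hut
      have h1 : (⟨u, hu⟩ : ({v, w, x}ᶜ : Set V)) ∉ F'' := fun h => hut ⟨⟨u, hu⟩, h, rfl⟩
      have := hfort.2 ⟨u, hu⟩ h1
      rwa [induce_nbr_ncard] at this
    by_cases hcase : ∃ b ∈ T, G.Adj x b
    · -- lift to T ∪ {v, w}
      obtain ⟨b, hbT, hbx⟩ := hcase
      refine hF.2 (insert v (insert w T)) ?_ ⟨⟨v, by simp⟩, ?_⟩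
      · rw [Set.ssubset_def]
        constructor
        · intro d hd
          simp only [Set.mem_insert_iff] at hd
          rcases hd with rfl | rfl | hd
          · exact hvF
          · exact hwF
          · exact hTF hd
        · intro h
          have := h hcF
          simp only [Set.mem_insert_iff] at this
          have hcv : c.val ≠ v := by
            intro he; exact (c.2 (by simp [he]))
          have hcw : c.val ≠ w := by
            intro he; exact (c.2 (by simp [he]))
          rcases this with h | h | h
          · exact hcv h
          · exact hcw h
          · exact hcT h
      · intro u hu
        simp only [Set.mem_insert_iff, not_or] at hu
        obtain ⟨huv, huw, huT⟩ := hu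
        by_cases hux : u = x
        · rw [hux]
          intro h1
          rw [Set.ncard_eq_one] at h1
          obtain ⟨a, ha⟩ := h1
          have h2 : w ∈ G.neighborSet x ∩ insert v (insert w T) := ⟨adjxw, by simp⟩
          have h3 : b ∈ G.neighborSet x ∩ insert v (insert w T) := ⟨hbx, by simp [hbT]⟩
          rw [ha, Set.mem_singleton_iff] at h2 h3
          exact hwT (h2 ▸ h3 ▸ hbT)
        · have hu' : u ∉ ({v, w, x} : Set V) := by simp [huv, huw, hux]
          have : G.neighborSet u ∩ insert v (insert w T) = G.neighborSet u ∩ T := by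
            ext d
            simp only [Set.mem_inter_iff, Set.mem_insert_iff, SimpleGraph.mem_neighborSet]
            constructor
            · rintro ⟨h1, rfl | rfl | h2⟩
              · exact absurd h1 (nadj_v u huw)
              · exact absurd h1 (nadj_w u huv hux)
              · exact ⟨h1, h2⟩
            · rintro ⟨h1, h2⟩; exact ⟨h1, Or.inr (Or.inr h2)⟩
          rw [this]
          exact hH u hu' huT
    · -- T itself is a fort of G
      push_neg at hcase
      refine hF.2 T ⟨hTF, fun h => hvT (h hvF)⟩ ⟨?_, ?_⟩
      · obtain ⟨a, ha⟩ := hfort.1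
        exact ⟨a.val, ⟨a, ha, rfl⟩⟩
      · intro u huT
        by_cases huv : u = v
        · rw [huv]
          have : G.neighborSet v ∩ T = ∅ := by
            rw [hv]
            ext d
            simp only [Set.mem_inter_iff, Set.mem_singleton_iff, Set.mem_empty_iff_false,
              iff_false, not_and]
            rintro rfl; exact hwT
          rw [this]
          simp
        · by_cases huw : u = w
          · rw [huw]
            have : G.neighborSet w ∩ T = ∅ := by
              rw [hw]
              ext d
              simp only [Set.mem_inter_iff, Set.mem_insert_iff, Set.mem_singleton_iff,
                Set.mem_empty_iff_false, iff_false, not_and]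
              rintro (rfl | rfl)
              · exact hvT
              · exact hxT
            rw [this]
            simp
          · by_cases hux : u = x
            · rw [hux]
              have : G.neighborSet x ∩ T = ∅ := by
                ext d
                simp only [Set.mem_inter_iff, SimpleGraph.mem_neighborSet,
                  Set.mem_empty_iff_false, iff_false, not_and]
                intro h1 h2
                exact hcase d h2 h1
              rw [this]
              simp
            · exact hH u (by simp [huv, huw, hux]) huT
end

section
/- Let ψ be the unique real root of z³ − z − 1 = 0. For every integer n ≥ 19 and every d ∈ {3, 4, 5}, the sequence a satisfies a(n−d) ≤ (101/100)·a(n)/ψ^d. -/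
lemma grow_aux (a : ℕ → ℕ)
    (hrec : ∀ n : ℕ, 4 ≤ n → a n = a (n - 2) + a (n - 3))
    (K d : ℕ) (hd3 : 3 ≤ d) (hd5 : d ≤ 5)
    (b19 : K * a (19 - d) ≤ 10000 * a 19)
    (b20 : K * a (20 - d) ≤ 10000 * a 20)
    (b21 : K * a (21 - d) ≤ 10000 * a 21) :
    ∀ n : ℕ, 19 ≤ n → K * a (n - d) ≤ 10000 * a n := by
  intro n
  induction n using Nat.strong_induction_on with
  | _ n ih =>
    intro hn
    by_cases h : n ≤ 21
    · interval_cases n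
      · exact b19
      · exact b20
      · exact b21
    · push_neg at h
      have h22 : 22 ≤ n := h
      have e1 : a n = a (n - 2) + a (n - 3) := hrec n (by omega)
      have e2 : a (n - d) = a (n - d - 2) + a (n - d - 3) := hrec (n - d) (by omega)
      have i1 : K * a ((n - 2) - d) ≤ 10000 * a (n - 2) := ih (n - 2) (by omega) (by omega)
      have i2 : K * a ((n - 3) - d) ≤ 10000 * a (n - 3) := ih (n - 3) (by omega) (by omega)
      have q1 : (n - 2) - d = n - d - 2 := by omega
      have q2 : (n - 3) - d = n - d - 3 := by omega
      rw [q1] at i1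
      rw [q2] at i2
      rw [e1, e2, Nat.mul_add, Nat.mul_add]
      exact Nat.add_le_add i1 i2

theorem stmt_14 (ψ : ℝ) (hψ : ψ ^ 3 - ψ - 1 = 0)
    (a : ℕ → ℕ) (h1 : a 1 = 1) (h2 : a 2 = 1) (h3 : a 3 = 1)
    (hrec : ∀ n : ℕ, 4 ≤ n → a n = a (n - 2) + a (n - 3))
    (n d : ℕ) (hn : 19 ≤ n) (hd : d = 3 ∨ d = 4 ∨ d = 5) :
    (a (n - d) : ℝ) ≤ 101 / 100 * (a n : ℝ) / ψ ^ d := by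
  -- numeric values
  have a4 : a 4 = 2 := by rw [hrec 4 (by norm_num)]; simp [h1, h2]
  have a5 : a 5 = 2 := by rw [hrec 5 (by norm_num)]; simp [h2, h3]
  have a6 : a 6 = 3 := by rw [hrec 6 (by norm_num)]; simp [h3, a4]
  have a7 : a 7 = 4 := by rw [hrec 7 (by norm_num)]; simp [a4, a5]
  have a8 : a 8 = 5 := by rw [hrec 8 (by norm_num)]; simp [a5, a6]
  have a9 : a 9 = 7 := by rw [hrec 9 (by norm_num)]; simp [a6, a7]
  have a10 : a 10 = 9 := by rw [hrec 10 (by norm_num)]; simp [a7, a8]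
  have a11 : a 11 = 12 := by rw [hrec 11 (by norm_num)]; simp [a8, a9]
  have a12 : a 12 = 16 := by rw [hrec 12 (by norm_num)]; simp [a9, a10]
  have a13 : a 13 = 21 := by rw [hrec 13 (by norm_num)]; simp [a10, a11]
  have a14 : a 14 = 28 := by rw [hrec 14 (by norm_num)]; simp [a11, a12]
  have a15 : a 15 = 37 := by rw [hrec 15 (by norm_num)]; simp [a12, a13]
  have a16 : a 16 = 49 := by rw [hrec 16 (by norm_num)]; simp [a13, a14]
  have a17 : a 17 = 65 := by rw [hrec 17 (by norm_num)]; simp [a14, a15]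
  have a18 : a 18 = 86 := by rw [hrec 18 (by norm_num)]; simp [a15, a16]
  have a19 : a 19 = 114 := by rw [hrec 19 (by norm_num)]; simp [a16, a17]
  have a20 : a 20 = 151 := by rw [hrec 20 (by norm_num)]; simp [a17, a18]
  have a21 : a 21 = 200 := by rw [hrec 21 (by norm_num)]; simp [a18, a19]
  -- bounds on ψ
  have hψpos : (0 : ℝ) < ψ := by nlinarith [sq_nonneg ψ, sq_nonneg (ψ - 1), sq_nonneg (ψ + 1)]
  have hψub : ψ ≤ 13248 / 10000 := by nlinarith [sq_nonneg (ψ - 13248 / 10000), sq_nonneg ψ]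
  have hpow : (0 : ℝ) < ψ ^ d := pow_pos hψpos d
  have h3e : ψ ^ 3 = ψ + 1 := by linarith
  have hψ2 : ψ ^ 2 ≤ 17551 / 10000 := by nlinarith
  have e4 : ψ ^ 4 = ψ ^ 2 + ψ := by linear_combination ψ * hψ
  have e5 : ψ ^ 5 = ψ ^ 2 + ψ + 1 := by linear_combination (ψ ^ 2 + 1) * hψ
  have hann : (0 : ℝ) ≤ (a n : ℝ) := Nat.cast_nonneg _
  rw [le_div_iff₀ hpow]
  have hxnn : (0 : ℝ) ≤ (a (n - d) : ℝ) := Nat.cast_nonneg _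
  rcases hd with rfl | rfl | rfl
  · have key : 23018 * a (n - 3) ≤ 10000 * a n := by
      refine grow_aux a hrec 23018 3 (by norm_num) (by norm_num) ?_ ?_ ?_ n hn
      · norm_num [a16, a19]
      · norm_num [a17, a20]
      · norm_num [a18, a21]
    have keyR : (23018 : ℝ) * (a (n - 3) : ℝ) ≤ 10000 * (a n : ℝ) := by
      exact_mod_cast key
    have hp3 : ψ ^ 3 ≤ 23248 / 10000 := by rw [h3e]; linarith
    have t := mul_le_mul_of_nonneg_right hp3 hxnn
    rw [mul_comm]
    linarith [t, keyR, hann]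
  · have key : 30495 * a (n - 4) ≤ 10000 * a n := by
      refine grow_aux a hrec 30495 4 (by norm_num) (by norm_num) ?_ ?_ ?_ n hn
      · norm_num [a15, a19]
      · norm_num [a16, a20]
      · norm_num [a17, a21]
    have keyR : (30495 : ℝ) * (a (n - 4) : ℝ) ≤ 10000 * (a n : ℝ) := by
      exact_mod_cast key
    have hp4 : ψ ^ 4 ≤ 30799 / 10000 := by rw [e4]; linarith
    have t := mul_le_mul_of_nonneg_right hp4 hxnn
    rw [mul_comm]
    linarith [t, keyR, hann]
  · have key : 40396 * a (n - 5) ≤ 10000 * a n := by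
      refine grow_aux a hrec 40396 5 (by norm_num) (by norm_num) ?_ ?_ ?_ n hn
      · norm_num [a14, a19]
      · norm_num [a15, a20]
      · norm_num [a16, a21]
    have keyR : (40396 : ℝ) * (a (n - 5) : ℝ) ≤ 10000 * (a n : ℝ) := by
      exact_mod_cast key
    have hp5 : ψ ^ 5 ≤ 40799 / 10000 := by rw [e5]; linarith
    have t := mul_le_mul_of_nonneg_right hp5 hxnn
    rw [mul_comm]
    linarith [t, keyR, hann]
end

section
/- Let ψ be the unique real root of z³ − z − 1 = 0. For all integers n and d with n ≥ d ≥ 3, we have (d−1)·C(n−d, 2)/ψ^d < (100/101)·C(n−1, 2). -/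
lemma psi_gt (ψ : ℝ) (hψ : ψ ^ 3 - ψ - 1 = 0) : 1.324 < ψ := by
  by_contra h
  push_neg at h
  nlinarith [sq_nonneg (ψ + 0.577), sq_nonneg (ψ - 1.3), sq_nonneg ψ,
    mul_nonneg (sq_nonneg (ψ + 0.577)) (sub_nonneg.mpr h)]

lemma key (ψ : ℝ) (hψ : ψ ^ 3 - ψ - 1 = 0) :
    ∀ d : ℕ, 3 ≤ d → 101 * ((d : ℝ) - 1) < 100 * ψ ^ d := by
  have h1 : 1.324 < ψ := psi_gt ψ hψ
  have h0 : (0:ℝ) < ψ := by linarith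
  have e3 : ψ ^ 3 = ψ + 1 := by linarith
  have e4 : ψ ^ 4 = ψ ^ 2 + ψ := by rw [show ψ^4 = ψ*ψ^3 by ring, e3]; ring
  have e5 : ψ ^ 5 = ψ ^ 2 + ψ + 1 := by rw [show ψ^5 = ψ^2*ψ^3 by ring, e3]; nlinarith
  have h5 : ∀ d : ℕ, 5 ≤ d → 101 * ((d : ℝ) - 1) < 100 * ψ ^ d := by
    intro d hd
    induction d, hd using Nat.le_induction with
    | base => rw [e5]; push_cast; nlinarith [sq_nonneg (ψ - 1.324)]
    | succ d hd ih =>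
        have hpos : (0:ℝ) < ψ ^ d := pow_pos h0 d
        have hd5 : (5:ℝ) ≤ (d:ℝ) := by exact_mod_cast hd
        push_cast
        rw [pow_succ]
        nlinarith [mul_lt_mul_of_pos_right h1 hpos]
  intro d hd
  rcases Nat.lt_or_ge d 5 with h | h
  · interval_cases d
    · rw [show ((3:ℕ):ℝ) = 3 by norm_num, e3]; linarith
    · rw [show ((4:ℕ):ℝ) = 4 by norm_num, e4]; nlinarith [sq_nonneg (ψ - 1.324)]
  · exact h5 _ h

theorem stmt_16 (ψ : ℝ) (hψ : ψ ^ 3 - ψ - 1 = 0)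
    (n d : ℕ) (hd : 3 ≤ d) (hdn : d ≤ n) :
    ((d - 1 : ℕ) : ℝ) * ((n - d).choose 2 : ℝ) / ψ ^ d <
      100 / 101 * (((n - 1).choose 2 : ℕ) : ℝ) := by
  have h1 : 1.324 < ψ := psi_gt ψ hψ
  have h0 : (0:ℝ) < ψ := by linarith
  have hpos : (0:ℝ) < ψ ^ d := pow_pos h0 d
  have hk := key ψ hψ d hd
  have hch : ((n - d).choose 2 : ℝ) ≤ ((n - 1).choose 2 : ℝ) := by
    exact_mod_cast Nat.choose_le_choose 2 (Nat.sub_le_sub_left (by omega) n)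
  have hch0 : (0:ℝ) ≤ ((n - d).choose 2 : ℝ) := by positivity
  have hB : (0:ℝ) < ((n - 1).choose 2 : ℝ) := by
    exact_mod_cast Nat.choose_pos (by omega : 2 ≤ n - 1)
  have hcast : ((d - 1 : ℕ) : ℝ) = (d : ℝ) - 1 := by
    have : 1 ≤ d := by omega
    push_cast [this]; ring
  rw [hcast, div_lt_iff₀ hpos]
  have hd1 : (0:ℝ) ≤ (d : ℝ) - 1 := by
    have : (3:ℝ) ≤ (d:ℝ) := by exact_mod_cast hd
    linarith
  nlinarith [mul_pos (by linarith : (0:ℝ) < 100 * ψ ^ d - 101 * ((d:ℝ) - 1)) hB,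
    mul_nonneg hd1 (sub_nonneg.mpr hch)]
end

section
/- For every integer n ≥ 8, the sequence a satisfies (5/3)·(a(n) − 1) ≥ C(n−6, 2). -/
lemma two_mul_choose2 (k : ℕ) : 2 * k.choose 2 = k * (k - 1) := by
  induction k with
  | zero => rfl
  | succ n ih =>
    rw [Nat.choose_succ_succ, Nat.choose_one_right, Nat.mul_add, ih, Nat.succ_sub_one]
    cases n with
    | zero => rfl
    | succ m => simp [Nat.succ_sub_one]; ring

lemma quad (m : ℕ) : 3 * ((m + 9) * (m + 8)) ≤
    3 * ((m + 7) * (m + 6)) + 3 * ((m + 6) * (m + 5)) + 10 := by nlinarith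

lemma key_s17 (a : ℕ → ℕ) (h1 : a 1 = 1) (h2 : a 2 = 1) (h3 : a 3 = 1)
    (hrec : ∀ n : ℕ, 4 ≤ n → a n = a (n - 2) + a (n - 3)) :
    ∀ n : ℕ, 8 ≤ n → 3 * (n - 6).choose 2 + 5 ≤ 5 * a n := by
  have e4 : a 4 = 2 := by rw [hrec 4 (by norm_num)]; norm_num [h1, h2]
  have e5 : a 5 = 2 := by rw [hrec 5 (by norm_num)]; norm_num [h2, h3]
  have e6 : a 6 = 3 := by rw [hrec 6 (by norm_num)]; norm_num [e4, h3]
  have e7 : a 7 = 4 := by rw [hrec 7 (by norm_num)]; norm_num [e4, e5]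
  have e8 : a 8 = 5 := by rw [hrec 8 (by norm_num)]; norm_num [e5, e6]
  have e9 : a 9 = 7 := by rw [hrec 9 (by norm_num)]; norm_num [e6, e7]
  have e10 : a 10 = 9 := by rw [hrec 10 (by norm_num)]; norm_num [e7, e8]
  have e11 : a 11 = 12 := by rw [hrec 11 (by norm_num)]; norm_num [e8, e9]
  have e12 : a 12 = 16 := by rw [hrec 12 (by norm_num)]; norm_num [e9, e10]
  have e13 : a 13 = 21 := by rw [hrec 13 (by norm_num)]; norm_num [e10, e11]
  have e14 : a 14 = 28 := by rw [hrec 14 (by norm_num)]; norm_num [e11, e12]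
  intro n
  induction n using Nat.strong_induction_on with
  | _ n ih =>
    intro hn
    by_cases hle : n ≤ 14
    · interval_cases n <;> simp_all <;> norm_num [Nat.choose]
    · push_neg at hle
      obtain ⟨m, rfl⟩ : ∃ m, n = m + 15 := ⟨n - 15, by omega⟩
      have hA := ih (m + 13) (by omega) (by omega)
      have hB := ih (m + 12) (by omega) (by omega)
      rw [hrec (m + 15) (by omega)]
      have r1 : m + 15 - 2 = m + 13 := by omega
      have r2 : m + 15 - 3 = m + 12 := by omega
      have r3 : m + 15 - 6 = m + 9 := by omega
      have r4 : m + 13 - 6 = m + 7 := by omega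
      have r5 : m + 12 - 6 = m + 6 := by omega
      rw [r1, r2, r3]
      rw [r4] at hA
      rw [r5] at hB
      have c1 := two_mul_choose2 (m + 9)
      have c2 := two_mul_choose2 (m + 7)
      have c3 := two_mul_choose2 (m + 6)
      have s1 : m + 9 - 1 = m + 8 := by omega
      have s2 : m + 7 - 1 = m + 6 := by omega
      have s3 : m + 6 - 1 = m + 5 := by omega
      rw [s1] at c1; rw [s2] at c2; rw [s3] at c3
      have hq := quad m
      linarith [c1, c2, c3, hA, hB, hq]

theorem stmt_17 (a : ℕ → ℕ) (h1 : a 1 = 1) (h2 : a 2 = 1) (h3 : a 3 = 1)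
    (hrec : ∀ n : ℕ, 4 ≤ n → a n = a (n - 2) + a (n - 3))
    (n : ℕ) (hn : 8 ≤ n) :
    (5 / 3 : ℝ) * ((a n : ℝ) - 1) ≥ ((n - 6).choose 2 : ℝ) := by
  have hk := key_s17 a h1 h2 h3 hrec n hn
  have : (3 * (n - 6).choose 2 + 5 : ℝ) ≤ 5 * a n := by exact_mod_cast hk
  linarith
end

section
/- For all integers n ≥ 8 and d with 6 ≤ d ≤ n, we have C(d−1, 2) + d·C(n−d, 2) ≤ C(d−1, 2)·a(n). -/
lemma two_mul_choose_two' (k : ℕ) : 2 * (k + 1).choose 2 = (k + 1) * k := by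
  induction k with
  | zero => rfl
  | succ k ih =>
    rw [Nat.choose_succ_succ]
    simp only [Nat.choose_one_right]
    rw [Nat.mul_add, ih]
    ring

lemma poly_aux1 (t : ℕ) : 3 * ((t + 8 + 1) * (t + 8)) ≤
    3 * ((t + 6 + 1) * (t + 6)) + 3 * ((t + 5 + 1) * (t + 5)) + 10 := by nlinarith

lemma poly_aux2 (e : ℕ) : 10 * (e + 6) * 2 ≤ 6 * ((e + 4 + 1) * (e + 4)) := by nlinarith

theorem stmt_18 (a : ℕ → ℕ) (h1 : a 1 = 1) (h2 : a 2 = 1) (h3 : a 3 = 1)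
    (hrec : ∀ n : ℕ, 4 ≤ n → a n = a (n - 2) + a (n - 3))
    (n d : ℕ) (hn : 8 ≤ n) (hd : 6 ≤ d) (hdn : d ≤ n) :
    (d - 1).choose 2 + d * (n - d).choose 2 ≤ (d - 1).choose 2 * a n := by
  have ha4 : a 4 = 2 := by rw [hrec 4 (by norm_num)]; norm_num [h1, h2]
  have ha5 : a 5 = 2 := by rw [hrec 5 (by norm_num)]; norm_num [h2, h3]
  have ha6 : a 6 = 3 := by rw [hrec 6 (by norm_num)]; norm_num [h3, ha4]
  have ha7 : a 7 = 4 := by rw [hrec 7 (by norm_num)]; norm_num [ha4, ha5]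
  have ha8 : a 8 = 5 := by rw [hrec 8 (by norm_num)]; norm_num [ha5, ha6]
  have ha9 : a 9 = 7 := by rw [hrec 9 (by norm_num)]; norm_num [ha6, ha7]
  have ha10 : a 10 = 9 := by rw [hrec 10 (by norm_num)]; norm_num [ha7, ha8]
  have ha11 : a 11 = 12 := by rw [hrec 11 (by norm_num)]; norm_num [ha8, ha9]
  have ha12 : a 12 = 16 := by rw [hrec 12 (by norm_num)]; norm_num [ha9, ha10]
  have ha13 : a 13 = 21 := by rw [hrec 13 (by norm_num)]; norm_num [ha10, ha11]
  have key : ∀ m, 8 ≤ m → 3 * (m - 5).choose 2 + 5 ≤ 5 * a m := by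
    intro m
    induction m using Nat.strong_induction_on with
    | _ m ih =>
      intro hm
      by_cases h14 : m ≤ 13
      · interval_cases m <;>
          simp only [ha8, ha9, ha10, ha11, ha12, ha13] <;> decide
      · push_neg at h14
        have hx2 := ih (m - 2) (by omega) (by omega)
        have hx3 := ih (m - 3) (by omega) (by omega)
        have hr := hrec m (by omega)
        obtain ⟨t, rfl⟩ : ∃ t, m = t + 14 := ⟨m - 14, by omega⟩
        have e1 : t + 14 - 5 = t + 8 + 1 := by omega
        have e2 : t + 14 - 2 - 5 = t + 6 + 1 := by omega
        have e3 : t + 14 - 3 - 5 = t + 5 + 1 := by omega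
        rw [e1]; rw [e2] at hx2; rw [e3] at hx3
        have hpoly : 3 * ((t + 8 + 1) * (t + 8)) ≤
            3 * ((t + 6 + 1) * (t + 6)) + 3 * ((t + 5 + 1) * (t + 5)) + 10 :=
          poly_aux1 t
        have hP : 3 * (2 * ((t + 8 + 1).choose 2)) ≤
            3 * (2 * ((t + 6 + 1).choose 2)) + 3 * (2 * ((t + 5 + 1).choose 2)) + 10 := by
          rw [two_mul_choose_two' (t + 8), two_mul_choose_two' (t + 6),
            two_mul_choose_two' (t + 5)]
          exact hpoly
        rw [hr]
        omega
  have hkey := key n hn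
  have hC : 10 * d ≤ 6 * (d - 1).choose 2 := by
    obtain ⟨e, rfl⟩ : ∃ e, d = e + 6 := ⟨d - 6, by omega⟩
    have hd1 : e + 6 - 1 = e + 4 + 1 := by omega
    rw [hd1]
    have c := two_mul_choose_two' (e + 4)
    have hpoly2 : 10 * (e + 6) * 2 ≤ 6 * ((e + 4 + 1) * (e + 4)) := poly_aux2 e
    omega
  have hmono : (n - d).choose 2 ≤ (n - 5).choose 2 :=
    Nat.choose_le_choose 2 (by omega)
  have e1 : 10 * d * ((n - d).choose 2) ≤ (6 * (d - 1).choose 2) * ((n - 5).choose 2) :=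
    Nat.mul_le_mul hC hmono
  have e2 : (d - 1).choose 2 * (10 + 6 * (n - 5).choose 2) ≤ (d - 1).choose 2 * (10 * a n) :=
    Nat.mul_le_mul_left _ (by omega)
  have h10 : (0:ℕ) < 10 := by norm_num
  apply Nat.le_of_mul_le_mul_left _ h10
  calc 10 * ((d - 1).choose 2 + d * (n - d).choose 2)
      = (d - 1).choose 2 * 10 + 10 * d * ((n - d).choose 2) := by ring
    _ ≤ (d - 1).choose 2 * 10 + (6 * (d - 1).choose 2) * ((n - 5).choose 2) :=
        Nat.add_le_add_left e1 _
    _ = (d - 1).choose 2 * (10 + 6 * (n - 5).choose 2) := by ring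
    _ ≤ (d - 1).choose 2 * (10 * a n) := e2
    _ = 10 * ((d - 1).choose 2 * a n) := by ring
end

section
/- For all integers n ≥ 8 and d with 6 ≤ d ≤ n−1, we have C(d−1, 2) + (d−1)·C(n−d, 2)·a(n−d) ≤ C(n, 2)·a(n). -/
private def bSeq : ℕ → ℕ
  | 0 => 0
  | 1 => 1
  | 2 => 1
  | n + 3 => bSeq (n + 1) + bSeq n

private lemma bSeq_add3 (n : ℕ) : bSeq (n + 3) = bSeq (n + 1) + bSeq n := by
  simp [bSeq]

private lemma bSeq_le_succ : ∀ n, bSeq n ≤ bSeq (n + 1)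
  | 0 => by decide
  | 1 => by decide
  | 2 => by decide
  | n + 3 => by
      rw [bSeq_add3, show n + 3 + 1 = (n+1) + 3 from rfl, bSeq_add3]
      exact Nat.add_le_add (bSeq_le_succ (n+1)) (bSeq_le_succ n)

private lemma bSeq_mono : ∀ {m n : ℕ}, m ≤ n → bSeq m ≤ bSeq n := by
  intro m n h
  induction n, h using Nat.le_induction with
  | base => exact le_refl _
  | succ k hk ih => exact le_trans ih (bSeq_le_succ k)

private lemma bSeq_pos {m : ℕ} (h : 1 ≤ m) : 1 ≤ bSeq m := bSeq_mono h

/-- generic step-3 induction: if `c * b k ≤ b (k+j)` on three consecutive bases, it holds above. -/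
private lemma bSeq_lin (c j k0 : ℕ)
    (h0 : c * bSeq k0 ≤ bSeq (k0 + j))
    (h1 : c * bSeq (k0 + 1) ≤ bSeq (k0 + 1 + j))
    (h2 : c * bSeq (k0 + 2) ≤ bSeq (k0 + 2 + j)) :
    ∀ k, k0 ≤ k → c * bSeq k ≤ bSeq (k + j) := by
  intro k
  induction k using Nat.strong_induction_on with
  | _ k ih =>
    intro hk
    rcases Nat.lt_or_ge k (k0 + 3) with h | h
    · have : k = k0 ∨ k = k0 + 1 ∨ k = k0 + 2 := by omega
      rcases this with rfl | rfl | rfl <;> assumption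
    · obtain ⟨m, rfl⟩ : ∃ m, k = m + 3 := ⟨k - 3, by omega⟩
      have i0 := ih m (by omega) (by omega)
      have i1 := ih (m + 1) (by omega) (by omega)
      calc c * bSeq (m + 3) = c * bSeq (m + 1) + c * bSeq m := by
              rw [bSeq_add3]; ring
        _ ≤ bSeq (m + 1 + j) + bSeq (m + j) := Nat.add_le_add i1 i0
        _ = bSeq (m + j + 3) := by
              rw [bSeq_add3 (m + j), show m + 1 + j = m + j + 1 from by ring]
        _ = bSeq (m + 3 + j) := by ring_nf

private lemma bSeq_key : ∀ e k, 2 ≤ k → (e = 0 → k ≠ 4) →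
    (e + 5) * bSeq k ≤ bSeq (k + e + 6) := by
  intro e
  induction e using Nat.strong_induction_on with
  | _ e ih =>
    match e with
    | 0 =>
      intro k hk hex
      have hk4 := hex rfl
      rcases Nat.lt_or_ge k 5 with h | h
      · have : k = 2 ∨ k = 3 := by omega
        rcases this with rfl | rfl <;> decide
      · simpa using bSeq_lin 5 6 5 (by decide) (by decide) (by decide) k h
    | 1 =>
      intro k hk _
      simpa using bSeq_lin 6 7 2 (by decide) (by decide) (by decide) k hk
    | 2 =>
      intro k hk _
      simpa using bSeq_lin 7 8 2 (by decide) (by decide) (by decide) k hk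
    | (e' + 3) =>
      intro k hk _
      by_cases hx : e' = 0 ∧ k = 4
      · obtain ⟨rfl, rfl⟩ := hx
        decide
      · have hprev := ih e' (by omega) k hk (fun h0 => by
          intro hk4; exact hx ⟨h0, hk4⟩)
        calc (e' + 3 + 5) * bSeq k ≤ 2 * ((e' + 5) * bSeq k) := by
              have : e' + 3 + 5 ≤ 2 * (e' + 5) := by omega
              calc (e' + 3 + 5) * bSeq k ≤ 2 * (e' + 5) * bSeq k :=
                     Nat.mul_le_mul_right _ this
                _ = 2 * ((e' + 5) * bSeq k) := by ring
          _ ≤ 2 * bSeq (k + e' + 6) := Nat.mul_le_mul_left _ hprev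
          _ ≤ bSeq (k + e' + 6 + 1) + bSeq (k + e' + 6) := by
              have := bSeq_le_succ (k + e' + 6); omega
          _ = bSeq (k + e' + 6 + 3) := by
              rw [bSeq_add3 (k + e' + 6)]
          _ = bSeq (k + (e' + 3) + 6) := by ring_nf

private lemma choose2_add (p q : ℕ) : p.choose 2 + q.choose 2 ≤ (p + q).choose 2 := by
  induction q with
  | zero => simp
  | succ q ih =>
    have h1 : (p + (q + 1)).choose 2 = (p + q) + (p + q).choose 2 := by
      rw [show p + (q + 1) = (p + q) + 1 from by ring, Nat.choose_succ_succ,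
        Nat.choose_one_right]
    have h2 : (q + 1).choose 2 = q + q.choose 2 := by
      rw [Nat.choose_succ_succ, Nat.choose_one_right]
    omega

theorem stmt_19 (a : ℕ → ℕ) (h1 : a 1 = 1) (h2 : a 2 = 1) (h3 : a 3 = 1)
    (hrec : ∀ n : ℕ, 4 ≤ n → a n = a (n - 2) + a (n - 3))
    (n d : ℕ) (hn : 8 ≤ n) (hd : 6 ≤ d) (hdn : d ≤ n - 1) :
    (d - 1).choose 2 + (d - 1) * (n - d).choose 2 * a (n - d) ≤ n.choose 2 * a n := by
  have hab : ∀ m, 1 ≤ m → a m = bSeq m := by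
    intro m
    induction m using Nat.strong_induction_on with
    | _ m ih =>
      intro hm
      rcases m with _ | _ | _ | _ | t
      · omega
      · rw [h1]; decide
      · rw [h2]; decide
      · rw [h3]; decide
      · rw [hrec (t + 4) (by omega)]
        have e2 : t + 4 - 2 = t + 2 := by omega
        have e3 : t + 4 - 3 = t + 1 := by omega
        rw [e2, e3, ih (t + 2) (by omega) (by omega), ih (t + 1) (by omega) (by omega),
          show t + 4 = (t + 1) + 3 from by ring, bSeq_add3]
  obtain ⟨k, hk1, hnk⟩ : ∃ k, 1 ≤ k ∧ n = d + k := ⟨n - d, by omega, by omega⟩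
  have hnd : n - d = k := by omega
  rw [hnd, hab n (by omega), hab k hk1]
  have hbn : 1 ≤ bSeq n := bSeq_pos (by omega)
  rcases eq_or_lt_of_le hk1 with hk1' | hk2
  · -- k = 1
    rw [← hk1']
    simp only [show Nat.choose 1 2 = 0 from rfl, Nat.mul_zero, Nat.zero_mul, Nat.add_zero]
    calc (d - 1).choose 2 ≤ n.choose 2 := Nat.choose_le_choose 2 (by omega)
      _ ≤ n.choose 2 * bSeq n := Nat.le_mul_of_pos_right _ hbn
  · have hk2 : 2 ≤ k := hk2
    by_cases hx : d = 6 ∧ k = 4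
    · obtain ⟨rfl, rfl⟩ := hx
      have : n = 10 := by omega
      subst this
      decide
    · have key : (d - 1) * bSeq k ≤ bSeq n := by
        have h := bSeq_key (d - 6) k hk2 (fun h0 hk4 => hx ⟨by omega, hk4⟩)
        have e1 : d - 6 + 5 = d - 1 := by omega
        have e2 : k + (d - 6) + 6 = n := by omega
        rwa [e1, e2] at h
      have hc : (d - 1).choose 2 + k.choose 2 ≤ n.choose 2 := by
        calc (d - 1).choose 2 + k.choose 2 ≤ d.choose 2 + k.choose 2 := by
              have := Nat.choose_le_choose 2 (show d - 1 ≤ d by omega); omega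
          _ ≤ (d + k).choose 2 := choose2_add d k
          _ = n.choose 2 := by rw [hnk]
      calc (d - 1).choose 2 + (d - 1) * k.choose 2 * bSeq k
          ≤ (d - 1).choose 2 * bSeq n + k.choose 2 * bSeq n := by
            have t1 : (d - 1).choose 2 ≤ (d - 1).choose 2 * bSeq n :=
              Nat.le_mul_of_pos_right _ hbn
            have t2 : (d - 1) * k.choose 2 * bSeq k ≤ k.choose 2 * bSeq n := by
              calc (d - 1) * k.choose 2 * bSeq k = k.choose 2 * ((d - 1) * bSeq k) := by ring
                _ ≤ k.choose 2 * bSeq n := Nat.mul_le_mul_left _ key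
            omega
        _ = ((d - 1).choose 2 + k.choose 2) * bSeq n := by ring
        _ ≤ n.choose 2 * bSeq n := Nat.mul_le_mul_right _ hc
end
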